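/- arXiv:2106.09332 — 7 statements merged into one kernel-verified Lean document; each statement's English description precedes it below -/
import Mathlib

section
/- Let g : ℝ → ℝ be a derivator with continuous part g^C, defined by g^C(t) = g(t) - g^B(t) where g^B(t) = ∑_{s ∈ [a,t) ∩ D_g} Δ⁺g(s) for t > a (and the corresponding negative sum for t ≤ a). Then every set E that is measurable for the Lebesgue–Stieltjes measure μ_g is also measurable for the Lebesgue–Stieltjes measure μ_{g^C}; i.e., the σ-algebra M_g is contained in M_{g^C}. -/
/-!
Removing the jumps only lowers the increments of `g`, so `μ_{g^C} ≤ μ_g` as outer measures, and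
both outer measures make every Borel set measurable. As `μ_g` is Borel regular, a `μ_g`-measurable
set of finite measure is a Borel set minus a `μ_g`-null set; that null set is also `μ_{g^C}`-null,
hence `μ_{g^C}`-measurable. Covering `ℝ` by bounded intervals removes the finiteness assumption.
-/

open MeasureTheory Set Function Filter Topology

noncomputable section

/-- A derivator: a non-decreasing, left-continuous function. -/
def IsDerivator (g : ℝ → ℝ) : Prop :=
  Monotone g ∧ ∀ x : ℝ, ContinuousWithinAt g (Set.Iic x) x

/-- The jump `Δ⁺g(t) = g(t⁺) - g(t)`. -/
def jumpG (g : ℝ → ℝ) (t : ℝ) : ℝ := Function.rightLim g t - g t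

/-- The set of discontinuity points of `g`. -/
def Dg (g : ℝ → ℝ) : Set ℝ := {t | 0 < jumpG g t}

/-- The jump part `g^B` of `g`, with base point `a`. -/
def jumpPart (g : ℝ → ℝ) (a : ℝ) : ℝ → ℝ := fun t =>
  if a < t then ∑' s : (Set.Ico a t : Set ℝ), jumpG g s
  else - ∑' s : (Set.Ico t a : Set ℝ), jumpG g s

/-- The continuous part `g^C = g - g^B` of `g`, with base point `a`. -/
def contPart (g : ℝ → ℝ) (a : ℝ) : ℝ → ℝ := fun t => g t - jumpPart g a t

/-- The Lebesgue–Stieltjes outer measure associated to `g`, generated by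
`μ_g([c,d)) = g d - g c` on half-open intervals. -/
def stieltjesOuter (g : ℝ → ℝ) : OuterMeasure ℝ :=
  OuterMeasure.ofFunction
    (fun s => ⨅ (p : ℝ × ℝ) (_ : s = Set.Ico p.1 p.2), ENNReal.ofReal (g p.2 - g p.1))
    (by
      refine le_antisymm ?_ zero_le
      refine le_trans (iInf₂_le ((0 : ℝ), (0 : ℝ)) ?_) ?_ <;> simp)

open Classical in
/-- The Lebesgue–Stieltjes measure of a non-decreasing left-continuous `g`: the measure with
`μ_g([c,d)) = g d - g c`.  It is realised as the Stieltjes measure of the right-continuous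
modification of `g`. -/
def stieltjesMeasure (g : ℝ → ℝ) : Measure ℝ :=
  if h : Monotone g then h.stieltjesFunction.measure else 0

variable {E : Type*} [NormedAddCommGroup E]

/-- `f` is `g`-continuous at `t` relative to the set `s`. -/
def GContWithin (g : ℝ → ℝ) (f : ℝ → E) (s : Set ℝ) (t : ℝ) : Prop :=
  ∀ ε > 0, ∃ δ > 0, ∀ u ∈ s, |g t - g u| < δ → ‖f t - f u‖ < ε

/-- `f` is `g`-continuous on the set `s`. -/
def GContOn (g : ℝ → ℝ) (f : ℝ → E) (s : Set ℝ) : Prop := ∀ t ∈ s, GContWithin g f s t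

/-- `t` lies in `C_g`: `g` is constant in a neighbourhood of `t`. -/
def InCg (g : ℝ → ℝ) (t : ℝ) : Prop :=
  ∃ ε > 0, ∀ u ∈ Set.Ioo (t - ε) (t + ε), ∀ v ∈ Set.Ioo (t - ε) (t + ε), g u = g v

/-- `t ∈ N_g⁻`: `t` is the left endpoint of a constancy interval of `g`, `t ∉ D_g`. -/
def InNgMinus (g : ℝ → ℝ) (t : ℝ) : Prop :=
  t ∉ Dg g ∧ ¬ InCg g t ∧
    ∃ ε > 0, ∀ u ∈ Set.Ioo t (t + ε), ∀ v ∈ Set.Ioo t (t + ε), g u = g v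

/-- `t ∈ N_g⁺`: `t` is the right endpoint of a constancy interval of `g`, `t ∉ D_g`. -/
def InNgPlus (g : ℝ → ℝ) (t : ℝ) : Prop :=
  t ∉ Dg g ∧ ¬ InCg g t ∧
    ∃ ε > 0, ∀ u ∈ Set.Ioo (t - ε) t, ∀ v ∈ Set.Ioo (t - ε) t, g u = g v

/-- The right endpoint `bₙ` of the constancy component of `g` containing `t`. -/
def compEnd (g : ℝ → ℝ) (t : ℝ) : ℝ := sSup {u | ∀ v ∈ Set.Icc t u, g v = g t}

open Classical in
/-- The Stieltjes `g`-derivative of `f : s → E` at `t`, in the extended sense: at points of `D_g`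
one takes the right-hand limit of the difference quotient, at points of `C_g` the right-hand
limit at the right endpoint of the constancy component, and elsewhere the limit of the difference
quotient restricted to points where `g` differs from `g t` (this covers the points of `N_g`). -/
def HasGDerivWithinAt [NormedSpace ℝ E] (g : ℝ → ℝ) (f : ℝ → E) (s : Set ℝ) (t : ℝ) (L : E) :
    Prop :=
  if t ∈ Dg g then
    Tendsto (fun u => (g u - g t)⁻¹ • (f u - f t)) (𝓝[s ∩ Set.Ioi t] t) (𝓝 L)
  else if InCg g t then
    Tendsto (fun u => (g u - g (compEnd g t))⁻¹ • (f u - f (compEnd g t)))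
      (𝓝[s ∩ Set.Ioi (compEnd g t)] (compEnd g t)) (𝓝 L)
  else
    Tendsto (fun u => (g u - g t)⁻¹ • (f u - f t)) (𝓝[s ∩ {u | g u ≠ g t}] t) (𝓝 L)

/-- `v` is `g`-absolutely continuous on `[0,T]`: it is an indefinite `μ_g`-integral. -/
def ACgOn (g : ℝ → ℝ) (v : ℝ → ℂ) (T : ℝ) : Prop :=
  ∃ h : ℝ → ℂ, MeasureTheory.IntegrableOn h (Set.Ico 0 T) (stieltjesMeasure g) ∧
    ∀ t ∈ Set.Icc 0 T, v t = v 0 + ∫ s in Set.Ico 0 t, h s ∂(stieltjesMeasure g)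

end

open scoped ENNReal

namespace MeasureTheory.OuterMeasure

variable {α : Type*} {μ ν : OuterMeasure α}

theorem isCaratheodory_of_null {s : Set α} (h : μ s = 0) : μ.IsCaratheodory s := by
  refine (isCaratheodory_iff_le' μ).2 fun t => ?_
  rw [measure_mono_null inter_subset_right h, zero_add]
  exact measure_mono sdiff_subset

variable [MeasurableSpace α]

theorem IsCaratheodory.exists_measurable_diff_null (hμ : μ.trim = μ) {s : Set α}
    (hs : μ.IsCaratheodory s) (hfin : μ s ≠ ∞) :
    ∃ t, s ⊆ t ∧ MeasurableSet t ∧ μ (t \ s) = 0 := by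
  obtain ⟨t, hst, ht, hμt⟩ := μ.exists_measurable_superset_eq_trim s
  refine ⟨t, hst, ht, ?_⟩
  have hsplit := hs t
  rw [inter_eq_self_of_subset_right hst, hμt, hμ] at hsplit
  exact (ENNReal.add_right_inj hfin).1 (hsplit.symm.trans (add_zero _).symm)

theorem IsCaratheodory.of_le_of_ne_top (hνμ : ν ≤ μ) (hμ : μ.trim = μ)
    (hν : ‹MeasurableSpace α› ≤ ν.caratheodory) {s : Set α} (hs : μ.IsCaratheodory s)
    (hfin : μ s ≠ ∞) : ν.IsCaratheodory s := by
  obtain ⟨t, hst, ht, hnull⟩ := hs.exists_measurable_diff_null hμ hfin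
  rw [← sdiff_sdiff_cancel_left hst]
  exact ν.isCaratheodory_sdiff (hν t ht)
    (isCaratheodory_of_null (nonpos_iff_eq_zero.1 ((hνμ _).trans_eq hnull)))

theorem IsCaratheodory.of_le (hνμ : ν ≤ μ) (hμ : μ.trim = μ)
    (hμm : ‹MeasurableSpace α› ≤ μ.caratheodory) (hν : ‹MeasurableSpace α› ≤ ν.caratheodory)
    {K : ℕ → Set α} (hK : ⋃ n, K n = univ) (hKm : ∀ n, MeasurableSet (K n))
    (hKfin : ∀ n, μ (K n) ≠ ∞) {s : Set α} (hs : μ.IsCaratheodory s) : ν.IsCaratheodory s := by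
  rw [← inter_univ s, ← hK, inter_iUnion]
  exact ν.isCaratheodory_iUnion fun n =>
    (μ.isCaratheodory_inter hs (hμm _ (hKm n))).of_le_of_ne_top hνμ hμ hν
      (ne_top_of_le_ne_top (hKfin n) (measure_mono inter_subset_right))

end MeasureTheory.OuterMeasure

section Stieltjes

variable {g h : ℝ → ℝ}

theorem stieltjesOuter_Ico_le (g : ℝ → ℝ) (c d : ℝ) :
    stieltjesOuter g (Ico c d) ≤ ENNReal.ofReal (g d - g c) :=
  (OuterMeasure.ofFunction_le _).trans (iInf₂_le_of_le (c, d) rfl le_rfl)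

theorem stieltjesOuter_Ico_ne_top (g : ℝ → ℝ) (c d : ℝ) : stieltjesOuter g (Ico c d) ≠ ∞ :=
  ((stieltjesOuter_Ico_le g c d).trans_lt ENNReal.ofReal_lt_top).ne

theorem trim_stieltjesOuter (g : ℝ → ℝ) : (stieltjesOuter g).trim = stieltjesOuter g := by
  refine le_antisymm (OuterMeasure.le_ofFunction.2 fun s => le_iInf₂ fun p hp => ?_)
    (OuterMeasure.le_trim _)
  rw [hp, OuterMeasure.trim_eq _ measurableSet_Ico]
  exact stieltjesOuter_Ico_le g p.1 p.2

theorem stieltjesOuter_le_stieltjesOuter (hgh : ∀ c d, c ≤ d → g d - g c ≤ h d - h c) :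
    stieltjesOuter g ≤ stieltjesOuter h := by
  refine OuterMeasure.le_ofFunction.2 fun s => le_iInf₂ fun p hp => ?_
  rw [hp]
  rcases le_total p.1 p.2 with hp | hp
  · exact (stieltjesOuter_Ico_le g _ _).trans (ENNReal.ofReal_le_ofReal (hgh _ _ hp))
  · rw [Ico_eq_empty_of_le hp, measure_empty]
    exact zero_le

theorem ofReal_sub_add_ofReal_sub_le (hg : Monotone g) (c d x : ℝ) :
    ENNReal.ofReal (g (min d x) - g c) + ENNReal.ofReal (g d - g (max c x))
      ≤ ENNReal.ofReal (g d - g c) := by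
  rcases le_total x c with hxc | hcx
  · rw [ENNReal.ofReal_of_nonpos (sub_nonpos.2 (hg ((min_le_right d x).trans hxc))), zero_add,
      max_eq_left hxc]
  rcases le_total d x with hdx | hxd
  · rw [ENNReal.ofReal_of_nonpos (sub_nonpos.2 (hg (hdx.trans (le_max_right c x)))), add_zero,
      min_eq_left hdx]
  rw [min_eq_right hxd, max_eq_right hcx,
    ← ENNReal.ofReal_add (sub_nonneg.2 (hg hcx)) (sub_nonneg.2 (hg hxd)), sub_add_sub_cancel']

theorem isCaratheodory_stieltjesOuter_Iio (hg : Monotone g) (x : ℝ) :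
    (stieltjesOuter g).IsCaratheodory (Iio x) := by
  refine OuterMeasure.ofFunction_caratheodory fun t => le_iInf₂ fun p hp => ?_
  rw [hp, Ico_inter_Iio, Ico_sdiff_Iio]
  refine (add_le_add ?_ ?_).trans (ofReal_sub_add_ofReal_sub_le hg p.1 p.2 x)
  exacts [iInf₂_le_of_le (p.1, min p.2 x) rfl le_rfl, iInf₂_le_of_le (max p.1 x, p.2) rfl le_rfl]

theorem borel_le_caratheodory_stieltjesOuter (hg : Monotone g) :
    borel ℝ ≤ (stieltjesOuter g).caratheodory := by
  rw [borel_eq_generateFrom_Iio]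
  refine MeasurableSpace.generateFrom_le ?_
  rintro _ ⟨x, rfl⟩
  exact isCaratheodory_stieltjesOuter_Iio hg x

end Stieltjes

section JumpPart

variable {g : ℝ → ℝ}

theorem jumpG_nonneg (hg : Monotone g) (t : ℝ) : 0 ≤ jumpG g t :=
  sub_nonneg.2 (hg.le_rightLim le_rfl)

theorem sum_jumpG_le_sub (hg : Monotone g) (F : Finset ℝ) {c d : ℝ} (hcd : c ≤ d)
    (hF : ∀ t ∈ F, t ∈ Ico c d) : ∑ t ∈ F, jumpG g t ≤ g d - g c := by
  induction F using Finset.induction_on_max generalizing d with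
  | empty => simpa using hg hcd
  | insert t F hlt ih =>
    have ht := hF t (Finset.mem_insert_self t F)
    rw [Finset.sum_insert fun htF => (hlt t htF).false]
    have hjump : jumpG g t ≤ g d - g t := sub_le_sub_right (hg.rightLim_le ht.2) _
    have hrest := ih ht.1 fun s hs => ⟨(hF s (Finset.mem_insert_of_mem hs)).1, hlt s hs⟩
    linarith

theorem sum_subtype_jumpG_le_sub (hg : Monotone g) {c d : ℝ} (hcd : c ≤ d)
    (u : Finset (Ico c d)) : ∑ t ∈ u, jumpG g t ≤ g d - g c := by
  refine (Finset.sum_map u (Embedding.subtype _) (jumpG g)).symm.trans_le ?_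
  refine sum_jumpG_le_sub hg _ hcd fun t ht => ?_
  obtain ⟨s, -, rfl⟩ := Finset.mem_map.1 ht
  exact s.2

theorem tsum_jumpG_of_le {c d : ℝ} (hdc : d ≤ c) : ∑' t : Ico c d, jumpG g t = 0 := by
  have := isEmpty_coe_sort.2 (Ico_eq_empty_of_le hdc)
  exact tsum_empty

theorem summable_jumpG (hg : Monotone g) (c d : ℝ) : Summable fun t : Ico c d => jumpG g t := by
  rcases le_total c d with hcd | hdc
  · exact summable_of_sum_le (fun t => jumpG_nonneg hg t) (sum_subtype_jumpG_le_sub hg hcd)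
  · have := isEmpty_coe_sort.2 (Ico_eq_empty_of_le hdc)
    exact summable_empty

theorem tsum_jumpG_le_sub (hg : Monotone g) {c d : ℝ} (hcd : c ≤ d) :
    ∑' t : Ico c d, jumpG g t ≤ g d - g c :=
  (summable_jumpG hg c d).tsum_le_of_sum_le (sum_subtype_jumpG_le_sub hg hcd)

theorem tsum_jumpG_Ico_add_Ico (hg : Monotone g) {c y d : ℝ} (hcy : c ≤ y) (hyd : y ≤ d) :
    ∑' t : Ico c y, jumpG g t + ∑' t : Ico y d, jumpG g t = ∑' t : Ico c d, jumpG g t := by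
  rw [← Ico_union_Ico_eq_Ico hcy hyd, Summable.tsum_union_disjoint (f := jumpG g)
    Ico_disjoint_Ico_same (summable_jumpG hg c y) (summable_jumpG hg y d)]

theorem jumpPart_eq_tsum_sub_tsum (g : ℝ → ℝ) (a t : ℝ) :
    jumpPart g a t = ∑' s : Ico a t, jumpG g s - ∑' s : Ico t a, jumpG g s := by
  unfold jumpPart
  split_ifs with h
  · rw [tsum_jumpG_of_le h.le, sub_zero]
  · rw [tsum_jumpG_of_le (not_lt.1 h), zero_sub]

theorem jumpPart_sub_jumpPart (hg : Monotone g) (a : ℝ) {c d : ℝ} (hcd : c ≤ d) :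
    jumpPart g a d - jumpPart g a c = ∑' t : Ico c d, jumpG g t := by
  simp only [jumpPart_eq_tsum_sub_tsum]
  rcases le_total a c with hac | hca
  · rw [tsum_jumpG_of_le (hac.trans hcd), tsum_jumpG_of_le hac,
      ← tsum_jumpG_Ico_add_Ico hg hac hcd]
    ring
  · rcases le_total d a with hda | had
    · rw [tsum_jumpG_of_le (hcd.trans hda), tsum_jumpG_of_le hda,
        ← tsum_jumpG_Ico_add_Ico hg hcd hda]
      ring
    · rw [tsum_jumpG_of_le had, tsum_jumpG_of_le hca, ← tsum_jumpG_Ico_add_Ico hg hca had]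
      ring

theorem contPart_sub_contPart (hg : Monotone g) (a : ℝ) {c d : ℝ} (hcd : c ≤ d) :
    contPart g a d - contPart g a c = g d - g c - ∑' t : Ico c d, jumpG g t := by
  rw [← jumpPart_sub_jumpPart hg a hcd]
  simp only [contPart]
  ring

theorem contPart_sub_le (hg : Monotone g) (a : ℝ) {c d : ℝ} (hcd : c ≤ d) :
    contPart g a d - contPart g a c ≤ g d - g c := by
  rw [contPart_sub_contPart hg a hcd, sub_le_self_iff]
  exact tsum_nonneg fun t => jumpG_nonneg hg t

theorem monotone_contPart (hg : Monotone g) (a : ℝ) : Monotone (contPart g a) := fun c d hcd => by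
  have := contPart_sub_contPart hg a hcd
  linarith [tsum_jumpG_le_sub hg hcd]

end JumpPart

theorem iUnion_Ico_neg_natCast : ⋃ n : ℕ, Ico (-(n : ℝ)) n = univ :=
  iUnion_eq_univ_iff.2 fun x => (exists_nat_gt |x|).imp fun _ hn =>
    ⟨neg_le_of_neg_le ((neg_le_abs x).trans hn.le), (le_abs_self x).trans_lt hn⟩

theorem stmt1_general (g : ℝ → ℝ) (hmono : Monotone g) (a : ℝ) (E : Set ℝ)
    (hE : (stieltjesOuter g).IsCaratheodory E) :
    (stieltjesOuter (contPart g a)).IsCaratheodory E :=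
  hE.of_le (stieltjesOuter_le_stieltjesOuter fun _ _ => contPart_sub_le hmono a)
    (trim_stieltjesOuter g) (borel_le_caratheodory_stieltjesOuter hmono)
    (borel_le_caratheodory_stieltjesOuter (monotone_contPart hmono a)) iUnion_Ico_neg_natCast
    (fun _ => measurableSet_Ico) fun _ => stieltjesOuter_Ico_ne_top g _ _

/-- every `μ_g`-measurable set is `μ_{g^C}`-measurable: `M_g ⊆ M_{g^C}`. -/
theorem stmt1 (g : ℝ → ℝ) (hmono : Monotone g)
    (hlc : ∀ x : ℝ, ContinuousWithinAt g (Set.Iic x) x) (a : ℝ) (E : Set ℝ)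
    (hE : (stieltjesOuter g).IsCaratheodory E) :
    (stieltjesOuter (contPart g a)).IsCaratheodory E :=
  stmt1_general g hmono a E hE
end

section
/- Let g be a derivator on [a,b] with continuous part g^C (g^C(a)=0) and pseudo-inverse γ : [0, g^C(b)] → [a,b], γ(x) = min{t : g^C(t) = x}. For every f ∈ L¹_g([a,b); 𝔽) and every t ∈ [a,b], ∫_{[a,t)} f dμ_{g^C} = ∫_{[0, g^C(t))} (f ∘ γ) dμ, where μ is Lebesgue measure. -/
open MeasureTheory Set Function Filter Topology

/-- The pseudo-inverse `γ(x) = min {t ∈ [a,b] : g^C(t) = x}` of the continuous part. -/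
noncomputable def pseudoInv (g : ℝ → ℝ) (a b : ℝ) (x : ℝ) : ℝ :=
  sInf {t | t ∈ Set.Icc a b ∧ contPart g a t = x}

namespace Stmt6Aux

variable {g : ℝ → ℝ}

lemma jumpG_nonneg (hm : Monotone g) (t : ℝ) : 0 ≤ jumpG g t :=
  sub_nonneg.2 (hm.le_rightLim le_rfl)

lemma jump_tsum_ennreal (hm : Monotone g) {s t : ℝ} (hst : s ≤ t) :
    ∑' u : (Set.Ico s t : Set ℝ), ENNReal.ofReal (jumpG g ↑u) ≤ ENNReal.ofReal (g t - g s) := by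
  rw [ENNReal.tsum_eq_iSup_sum]
  refine iSup_le fun F => ?_
  have key : ∀ u : (Set.Ico s t : Set ℝ),
      ENNReal.ofReal (jumpG g ↑u) = volume (Set.Ioc (g ↑u) (rightLim g ↑u)) := by
    intro u; rw [Real.volume_Ioc]; rfl
  calc (∑ u ∈ F, ENNReal.ofReal (jumpG g ↑u))
      = ∑ u ∈ F, volume (Set.Ioc (g ↑u) (rightLim g ↑u)) := by simp_rw [key]
    _ = volume (⋃ u ∈ F, Set.Ioc (g ↑u) (rightLim g ↑u)) := by
        rw [measure_biUnion_finset ?_ fun _ _ => measurableSet_Ioc]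
        intro u _ v _ huv
        have hne : (u : ℝ) ≠ (v : ℝ) := fun hh => huv (Subtype.coe_injective hh)
        rcases hne.lt_or_gt with hlt | hlt
        · exact Set.Ioc_disjoint_Ioc.2
            (min_le_of_left_le ((hm.rightLim_le hlt).trans (le_max_right _ _)))
        · exact Set.Ioc_disjoint_Ioc.2
            (min_le_of_right_le ((hm.rightLim_le hlt).trans (le_max_left _ _)))
    _ ≤ volume (Set.Ioc (g s) (g t)) := by
        refine measure_mono (Set.iUnion₂_subset fun u _ => Set.Ioc_subset_Ioc
          (hm u.2.1) (hm.rightLim_le u.2.2))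
    _ = ENNReal.ofReal (g t - g s) := Real.volume_Ioc

lemma jump_summable (hm : Monotone g) (s t : ℝ) :
    Summable (fun u : (Set.Ico s t : Set ℝ) => jumpG g ↑u) := by
  rcases le_or_gt s t with hst | hst
  · have h1 : (∑' u : (Set.Ico s t : Set ℝ), ENNReal.ofReal (jumpG g ↑u)) ≠ ⊤ :=
      ((jump_tsum_ennreal hm hst).trans_lt ENNReal.ofReal_lt_top).ne
    have h2 := ENNReal.summable_toReal h1
    refine h2.congr fun u => ?_
    exact ENNReal.toReal_ofReal (jumpG_nonneg hm _)
  · have : (Set.Ico s t : Set ℝ) = ∅ := Set.Ico_eq_empty (not_lt.2 hst.le)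
    haveI : IsEmpty ((Set.Ico s t : Set ℝ) : Type) := by rw [this]; infer_instance
    exact summable_empty

lemma jump_tsum_le (hm : Monotone g) {s t : ℝ} (hst : s ≤ t) :
    (∑' u : (Set.Ico s t : Set ℝ), jumpG g ↑u) ≤ g t - g s := by
  have hs := jump_summable hm s t
  have h0 := ENNReal.ofReal_tsum_of_nonneg (fun u => jumpG_nonneg hm _) hs
  have h2 := jump_tsum_ennreal hm hst
  rw [← h0] at h2
  exact (ENNReal.ofReal_le_ofReal_iff (sub_nonneg.2 (hm hst))).1 h2

lemma jump_tsum_nonneg (hm : Monotone g) (s t : ℝ) :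
    0 ≤ ∑' u : (Set.Ico s t : Set ℝ), jumpG g ↑u :=
  tsum_nonneg fun u => jumpG_nonneg hm _


lemma tsum_Ico_empty (g : ℝ → ℝ) (a : ℝ) :
    (∑' u : (Set.Ico a a : Set ℝ), jumpG g ↑u) = 0 := by
  rw [Set.Ico_self]; exact tsum_empty

lemma jumpPart_eq_of_le {a t : ℝ} (h : a ≤ t) :
    jumpPart g a t = ∑' u : (Set.Ico a t : Set ℝ), jumpG g ↑u := by
  rcases eq_or_lt_of_le h with rfl | hlt
  · simp [jumpPart, tsum_Ico_empty]
  · simp [jumpPart, if_pos hlt]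

lemma jumpPart_eq_of_ge {a t : ℝ} (h : t ≤ a) :
    jumpPart g a t = - ∑' u : (Set.Ico t a : Set ℝ), jumpG g ↑u := by
  rcases eq_or_lt_of_le h with rfl | hlt
  · simp [jumpPart, tsum_Ico_empty]
  · rw [jumpPart, if_neg (not_lt.2 hlt.le)]

lemma tsum_Ico_split (hm : Monotone g) {u v w : ℝ} (huv : u ≤ v) (hvw : v ≤ w) :
    (∑' x : (Set.Ico u w : Set ℝ), jumpG g ↑x)
      = (∑' x : (Set.Ico u v : Set ℝ), jumpG g ↑x)
        + ∑' x : (Set.Ico v w : Set ℝ), jumpG g ↑x := by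
  rw [← Set.Ico_union_Ico_eq_Ico huv hvw]
  exact Summable.tsum_union_disjoint (f := jumpG g) Set.Ico_disjoint_Ico_same
    ((jump_summable hm u v).congr fun _ => rfl) ((jump_summable hm v w).congr fun _ => rfl)

lemma jumpPart_sub (hm : Monotone g) (a : ℝ) {s t : ℝ} (hst : s ≤ t) :
    jumpPart g a t - jumpPart g a s = ∑' u : (Set.Ico s t : Set ℝ), jumpG g ↑u := by
  rcases le_total a s with h | h
  · rw [jumpPart_eq_of_le (h.trans hst), jumpPart_eq_of_le h, tsum_Ico_split hm h hst]; ring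
  · rcases le_total a t with h2 | h2
    · rw [jumpPart_eq_of_le h2, jumpPart_eq_of_ge h, tsum_Ico_split hm h h2]; ring
    · rw [jumpPart_eq_of_ge h2, jumpPart_eq_of_ge h, tsum_Ico_split hm hst h2]; ring

lemma contPart_sub (hm : Monotone g) (a : ℝ) {s t : ℝ} (hst : s ≤ t) :
    contPart g a t - contPart g a s
      = (g t - g s) - ∑' u : (Set.Ico s t : Set ℝ), jumpG g ↑u := by
  have h1 := jumpPart_sub (g := g) hm a hst
  simp only [contPart]
  linarith

lemma contPart_mono (hm : Monotone g) (a : ℝ) : Monotone (contPart g a) := by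
  intro s t hst
  have h1 := contPart_sub hm a hst
  have h2 := jump_tsum_le hm hst
  linarith

lemma contPart_apply_base (g : ℝ → ℝ) (a : ℝ) : contPart g a a = g a := by
  simp [contPart, jumpPart, tsum_Ico_empty]

lemma real_le_of_forall_pos_le_add {x y : ℝ} (h : ∀ ε : ℝ, 0 < ε → x ≤ y + ε) : x ≤ y := by
  by_contra hxy
  push_neg at hxy
  have := h ((x - y) / 2) (by linarith)
  linarith

lemma contPart_continuous (hg : IsDerivator g) (a : ℝ) : Continuous (contPart g a) := by
  obtain ⟨hm, hlc⟩ := hg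
  have hmono := contPart_mono hm a
  refine continuous_iff_continuousAt.2 fun t => ?_
  rw [hmono.continuousAt_iff_leftLim_eq_rightLim]
  have h1 : leftLim (contPart g a) t ≤ contPart g a t := hmono.leftLim_le le_rfl
  have h2 : contPart g a t ≤ rightLim (contPart g a) t := hmono.le_rightLim le_rfl
  have h3 : rightLim (contPart g a) t ≤ contPart g a t := by
    refine real_le_of_forall_pos_le_add fun ε hε => ?_
    have hev : ∀ᶠ s in 𝓝[>] t, g s < rightLim g t + ε :=
      hm.tendsto_rightLim t (Iio_mem_nhds (by linarith))
    obtain ⟨s, hs, hs_gt⟩ := (hev.and eventually_mem_nhdsWithin).exists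
    have hsub := contPart_sub hm a hs_gt.le
    have hle : jumpG g t ≤ ∑' u : (Set.Ico t s : Set ℝ), jumpG g ↑u :=
      Summable.le_tsum (jump_summable hm t s) ⟨t, le_rfl, hs_gt⟩ fun j _ => jumpG_nonneg hm _
    have hrl : rightLim (contPart g a) t ≤ contPart g a s := hmono.rightLim_le hs_gt
    have hj : jumpG g t = rightLim g t - g t := rfl
    linarith
  have h4 : contPart g a t ≤ leftLim (contPart g a) t := by
    refine real_le_of_forall_pos_le_add fun ε hε => ?_
    have hev : ∀ᶠ s in 𝓝[<] t, g t - ε < g s := by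
      have h5 : ∀ᶠ s in 𝓝[Set.Iic t] t, g s ∈ Set.Ioi (g t - ε) :=
        hlc t (Ioi_mem_nhds (by linarith))
      exact h5.filter_mono (nhdsWithin_mono t Set.Iio_subset_Iic_self)
    obtain ⟨s, hs, hs_lt⟩ := (hev.and eventually_mem_nhdsWithin).exists
    have hsub := contPart_sub hm a (le_of_lt hs_lt)
    have hnn := jump_tsum_nonneg hm s t
    have hll : contPart g a s ≤ leftLim (contPart g a) t := hmono.le_leftLim hs_lt
    linarith
  linarith


/-! ### Stieltjes measure of the continuous part -/

lemma contPart_rightLim (hg : IsDerivator g) (a t : ℝ) :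
    rightLim (contPart g a) t = contPart g a t :=
  rightLim_eq_of_tendsto
    (((contPart_continuous hg a).continuousAt).continuousWithinAt)

lemma contPart_leftLim (hg : IsDerivator g) (a t : ℝ) :
    leftLim (contPart g a) t = contPart g a t :=
  leftLim_eq_of_tendsto
    (((contPart_continuous hg a).continuousAt).continuousWithinAt)

lemma contPart_stieltjesFun (hg : IsDerivator g) (a : ℝ) :
    ⇑((contPart_mono hg.1 a).stieltjesFunction) = contPart g a :=
  funext fun t => contPart_rightLim hg a t

lemma stieltjesMeasure_contPart_eq (hg : IsDerivator g) (a : ℝ) :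
    stieltjesMeasure (contPart g a) = ((contPart_mono hg.1 a).stieltjesFunction).measure :=
  dif_pos (contPart_mono hg.1 a)

lemma measC_Ioc (hg : IsDerivator g) (a : ℝ) {c d : ℝ} :
    stieltjesMeasure (contPart g a) (Set.Ioc c d)
      = ENNReal.ofReal (contPart g a d - contPart g a c) := by
  rw [stieltjesMeasure_contPart_eq hg a, StieltjesFunction.measure_Ioc]
  rw [show ((contPart_mono hg.1 a).stieltjesFunction) d = contPart g a d from
    congrFun (contPart_stieltjesFun hg a) d,
    show ((contPart_mono hg.1 a).stieltjesFunction) c = contPart g a c from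
    congrFun (contPart_stieltjesFun hg a) c]

lemma measC_Ioo (hg : IsDerivator g) (a : ℝ) {c d : ℝ} :
    stieltjesMeasure (contPart g a) (Set.Ioo c d)
      = ENNReal.ofReal (contPart g a d - contPart g a c) := by
  rw [stieltjesMeasure_contPart_eq hg a, StieltjesFunction.measure_Ioo]
  rw [show leftLim (⇑((contPart_mono hg.1 a).stieltjesFunction)) d = contPart g a d by
      rw [contPart_stieltjesFun hg a]; exact contPart_leftLim hg a d,
    show ((contPart_mono hg.1 a).stieltjesFunction) c = contPart g a c from
    congrFun (contPart_stieltjesFun hg a) c]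

lemma measC_Icc (hg : IsDerivator g) (a : ℝ) {c d : ℝ} :
    stieltjesMeasure (contPart g a) (Set.Icc c d)
      = ENNReal.ofReal (contPart g a d - contPart g a c) := by
  rw [stieltjesMeasure_contPart_eq hg a, StieltjesFunction.measure_Icc]
  rw [show leftLim (⇑((contPart_mono hg.1 a).stieltjesFunction)) c = contPart g a c by
      rw [contPart_stieltjesFun hg a]; exact contPart_leftLim hg a c,
    show ((contPart_mono hg.1 a).stieltjesFunction) d = contPart g a d from
    congrFun (contPart_stieltjesFun hg a) d]

/-! ### comparison of measures -/

lemma stieltjesMeasure_contPart_le (hg : IsDerivator g) (a : ℝ) :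
    stieltjesMeasure (contPart g a) ≤ stieltjesMeasure g := by
  have hm := hg.1
  have hmono := contPart_mono hm a
  rw [stieltjesMeasure_contPart_eq hg a, stieltjesMeasure, dif_pos hm]
  refine Measure.le_iff'.2 fun s => ?_
  have e1 : ∀ (f : StieltjesFunction ℝ) (s : Set ℝ), f.measure s = f.outer s := by
    intro f s
    rw [StieltjesFunction.measure]; rfl
  rw [e1, e1]
  have hlen : ∀ u : Set ℝ,
      (hmono.stieltjesFunction).length u ≤ (hm.stieltjesFunction).length u := by
    intro u
    have hne : ¬ IsEmpty ℝ := not_isEmpty_of_nonempty ℝ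
    rw [StieltjesFunction.length, StieltjesFunction.length, if_neg hne, if_neg hne]
    refine le_iInf fun c => le_iInf fun d => le_iInf fun hsub => ?_
    refine le_trans (iInf_le_of_le c (iInf_le_of_le d (iInf_le _ hsub))) ?_
    have hFh : ∀ x, hmono.stieltjesFunction x = contPart g a x :=
      congrFun (contPart_stieltjesFun hg a)
    rw [hFh, hFh]
    rcases le_or_gt d c with hdc | hcd
    · rw [ENNReal.ofReal_of_nonpos (by have := hmono hdc; linarith)]
      exact zero_le
    · refine ENNReal.ofReal_le_ofReal ?_
      have hsub2 := contPart_sub hm a hcd.le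
      have hle : jumpG g c ≤ ∑' u : (Set.Ico c d : Set ℝ), jumpG g ↑u :=
        Summable.le_tsum (jump_summable hm c d) ⟨c, le_rfl, hcd⟩ fun j _ => jumpG_nonneg hm _
      have hj : ∀ x, hm.stieltjesFunction x = g x + jumpG g x := by
        intro x
        rw [hm.stieltjesFunction_eq]
        show rightLim g x = g x + (rightLim g x - g x)
        ring
      rw [hj, hj]
      have hjd := jumpG_nonneg hm d
      linarith
  rw [StieltjesFunction.outer, StieltjesFunction.outer,
    OuterMeasure.ofFunction_apply, OuterMeasure.ofFunction_apply]
  refine le_iInf₂ fun ts hts => ?_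
  exact le_trans (iInf₂_le ts hts) (ENNReal.tsum_le_tsum fun i => hlen (ts i))


/-! ### the pseudo-inverse -/

lemma contPart_base_zero (a : ℝ) (hga : g a = 0) : contPart g a a = 0 := by
  rw [contPart_apply_base, hga]

lemma gamma_mem (hg : IsDerivator g) (a b : ℝ) (hab : a ≤ b) (hga : g a = 0) {x : ℝ}
    (hx : x ∈ Set.Icc 0 (contPart g a b)) :
    pseudoInv g a b x ∈ Set.Icc a b ∧ contPart g a (pseudoInv g a b x) = x := by
  have hcont := contPart_continuous hg a
  have ha0 := contPart_base_zero (g := g) a hga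
  have hne : {u | u ∈ Set.Icc a b ∧ contPart g a u = x}.Nonempty := by
    have hx2 : x ∈ Set.Icc (contPart g a a) (contPart g a b) := by rw [ha0]; exact hx
    obtain ⟨u, hu, hux⟩ := intermediate_value_Icc hab hcont.continuousOn hx2
    exact ⟨u, hu, hux⟩
  have hc : IsClosed {u | u ∈ Set.Icc a b ∧ contPart g a u = x} := by
    have he : {u | u ∈ Set.Icc a b ∧ contPart g a u = x}
        = Set.Icc a b ∩ (contPart g a) ⁻¹' {x} := by
      ext u; simp [Set.mem_inter_iff, Set.mem_preimage]
    rw [he]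
    exact isClosed_Icc.inter (isClosed_singleton.preimage hcont)
  have hbdd : BddBelow {u | u ∈ Set.Icc a b ∧ contPart g a u = x} :=
    ⟨a, fun u hu => hu.1.1⟩
  exact hc.csInf_mem hne hbdd

lemma gamma_le_iff (hg : IsDerivator g) (a b : ℝ) (hab : a ≤ b) (hga : g a = 0) {x : ℝ}
    (hx : x ∈ Set.Icc 0 (contPart g a b)) {s : ℝ} (hs : s ∈ Set.Icc a b) :
    pseudoInv g a b x ≤ s ↔ x ≤ contPart g a s := by
  constructor
  · intro hle
    rw [← (gamma_mem hg a b hab hga hx).2]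
    exact contPart_mono hg.1 a hle
  · intro hxs
    have hcont := contPart_continuous hg a
    have hx2 : x ∈ Set.Icc (contPart g a a) (contPart g a s) := by
      rw [contPart_base_zero (g := g) a hga]; exact ⟨hx.1, hxs⟩
    obtain ⟨u, hu, hux⟩ := intermediate_value_Icc hs.1 hcont.continuousOn hx2
    have hle : pseudoInv g a b x ≤ u :=
      csInf_le ⟨a, fun v hv => hv.1.1⟩ ⟨⟨hu.1, hu.2.trans hs.2⟩, hux⟩
    exact hle.trans hu.2

/-- the globally monotone modification of the pseudo-inverse -/
noncomputable def clampInv (g : ℝ → ℝ) (a b : ℝ) : ℝ → ℝ :=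
  fun x => pseudoInv g a b (max 0 (min x (contPart g a b)))

lemma clamp_mem (hg : IsDerivator g) (a b : ℝ) (hab : a ≤ b) (hga : g a = 0) (x : ℝ) :
    max 0 (min x (contPart g a b)) ∈ Set.Icc 0 (contPart g a b) := by
  have hb0 : 0 ≤ contPart g a b := by
    rw [← contPart_base_zero (g := g) a hga]; exact contPart_mono hg.1 a hab
  exact ⟨le_max_left _ _, max_le hb0 (min_le_right _ _)⟩

lemma clampInv_mono (hg : IsDerivator g) (a b : ℝ) (hab : a ≤ b) (hga : g a = 0) :
    Monotone (clampInv g a b) := by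
  intro x y hxy
  have hy := gamma_mem hg a b hab hga (clamp_mem hg a b hab hga y)
  refine (gamma_le_iff hg a b hab hga (clamp_mem hg a b hab hga x) hy.1).2 ?_
  rw [hy.2]
  exact max_le_max le_rfl (min_le_min hxy le_rfl)

lemma clampInv_eq (hg : IsDerivator g) (a b : ℝ) (hab : a ≤ b) {t : ℝ} (ht : t ∈ Set.Icc a b)
    {x : ℝ} (hx : x ∈ Set.Ico 0 (contPart g a t)) : clampInv g a b x = pseudoInv g a b x := by
  have hxb : x ≤ contPart g a b := (hx.2.le).trans (contPart_mono hg.1 a ht.2)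
  rw [clampInv, min_eq_left hxb, max_eq_right hx.1]

/-! ### the measure identity -/

lemma map_measure_eq (hg : IsDerivator g) (a b : ℝ) (hab : a ≤ b) (hga : g a = 0) {t : ℝ}
    (ht : t ∈ Set.Icc a b) :
    Measure.map (clampInv g a b) (volume.restrict (Set.Ico 0 (contPart g a t)))
      = (stieltjesMeasure (contPart g a)).restrict (Set.Ico a t) := by
  have hm := hg.1
  have hmono := contPart_mono hm a
  have ha0 := contPart_base_zero (g := g) a hga
  have hγmeas : Measurable (clampInv g a b) := (clampInv_mono hg a b hab hga).measurable
  haveI h1 : IsFiniteMeasure (volume.restrict (Set.Ico 0 (contPart g a t))) := by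
    refine ⟨?_⟩
    rw [Measure.restrict_apply_univ, Real.volume_Ico]
    exact ENNReal.ofReal_lt_top
  haveI h2 : IsFiniteMeasure
      (Measure.map (clampInv g a b) (volume.restrict (Set.Ico 0 (contPart g a t)))) := by
    refine ⟨?_⟩
    rw [Measure.map_apply hγmeas MeasurableSet.univ]
    exact measure_lt_top _ _
  refine Measure.ext_of_Ioc _ _ fun c d hcd => ?_
  have hc'mem : min t (max a c) ∈ Set.Icc a t :=
    ⟨le_min ht.1 (le_max_left a c), min_le_left _ _⟩
  have hd'mem : min t (max a d) ∈ Set.Icc a t :=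
    ⟨le_min ht.1 (le_max_left a d), min_le_left _ _⟩
  -- volume of the sublevel sets of the clamped pseudo-inverse
  have hS : ∀ s : ℝ, volume (clampInv g a b ⁻¹' (Set.Iic s) ∩ Set.Ico 0 (contPart g a t))
      = ENNReal.ofReal (contPart g a (min t (max a s))) := by
    intro s
    have hs'mem : min t (max a s) ∈ Set.Icc a t :=
      ⟨le_min ht.1 (le_max_left a s), min_le_left _ _⟩
    have hs'b : min t (max a s) ∈ Set.Icc a b := ⟨hs'mem.1, hs'mem.2.trans ht.2⟩
    apply le_antisymm
    · refine le_trans (measure_mono ?_)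
        (le_of_eq (by rw [Real.volume_Icc, sub_zero]))
      rintro x ⟨hx1, hx2⟩
      have hid := clampInv_eq hg a b hab ht hx2
      have hxb : x ∈ Set.Icc 0 (contPart g a b) :=
        ⟨hx2.1, hx2.2.le.trans (hmono ht.2)⟩
      obtain ⟨hγmem, hγval⟩ := gamma_mem hg a b hab hga hxb
      have hγle_s : pseudoInv g a b x ≤ s := by rw [← hid]; exact hx1
      have hγlt_t : pseudoInv g a b x < t := by
        by_contra hcon
        push_neg at hcon
        have hhh := hmono hcon
        rw [hγval] at hhh
        exact absurd hx2.2 (not_lt.2 hhh)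
      have hγle : pseudoInv g a b x ≤ min t (max a s) :=
        le_min hγlt_t.le (hγle_s.trans (le_max_right a s))
      exact ⟨hx2.1, by rw [← hγval]; exact hmono hγle⟩
    · refine le_trans (le_of_eq (by rw [Real.volume_Ico, sub_zero])) (measure_mono ?_)
      rcases lt_or_ge s a with hsa | has
      · have he : min t (max a s) = a := by
          rw [max_eq_left hsa.le, min_eq_right ht.1]
        rw [he, ha0]
        simp
      · intro x hx
        have hxs' : x < contPart g a (min t (max a s)) := hx.2
        have hxt : x < contPart g a t := lt_of_lt_of_le hxs' (hmono hs'mem.2)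
        have hxb : x ∈ Set.Icc 0 (contPart g a b) := ⟨hx.1, hxt.le.trans (hmono ht.2)⟩
        refine ⟨?_, hx.1, hxt⟩
        show clampInv g a b x ≤ s
        rw [clampInv_eq hg a b hab ht ⟨hx.1, hxt⟩]
        have hle1 : pseudoInv g a b x ≤ min t (max a s) :=
          (gamma_le_iff hg a b hab hga hxb hs'b).2 hxs'.le
        exact hle1.trans (le_trans (min_le_right _ _) (le_of_eq (max_eq_right has)))
  -- left-hand side
  have hLHS : Measure.map (clampInv g a b) (volume.restrict (Set.Ico 0 (contPart g a t)))
      (Set.Ioc c d)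
      = ENNReal.ofReal (contPart g a (min t (max a d)) - contPart g a (min t (max a c))) := by
    rw [Measure.map_apply hγmeas measurableSet_Ioc, Measure.restrict_apply' measurableSet_Ico]
    have hsplit : clampInv g a b ⁻¹' (Set.Ioc c d) ∩ Set.Ico 0 (contPart g a t)
        = (clampInv g a b ⁻¹' (Set.Iic d) ∩ Set.Ico 0 (contPart g a t))
          \ (clampInv g a b ⁻¹' (Set.Iic c) ∩ Set.Ico 0 (contPart g a t)) := by
      ext x
      simp only [Set.mem_diff, Set.mem_inter_iff, Set.mem_preimage, Set.mem_Ioc, Set.mem_Iic]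
      constructor
      · rintro ⟨⟨hxc, hxd⟩, hP⟩
        exact ⟨⟨hxd, hP⟩, fun hcon => absurd hcon.1 (not_le.2 hxc)⟩
      · rintro ⟨⟨hxd, hP⟩, hn⟩
        exact ⟨⟨not_le.1 fun hc0 => hn ⟨hc0, hP⟩, hxd⟩, hP⟩
    rw [hsplit, measure_diff
      (Set.inter_subset_inter_left _ (Set.preimage_mono (Set.Iic_subset_Iic.2 hcd.le)))
      (((hγmeas measurableSet_Iic).inter measurableSet_Ico).nullMeasurableSet)
      (by rw [hS c]; exact ENNReal.ofReal_ne_top), hS d, hS c,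
      ← ENNReal.ofReal_sub _ (by rw [← ha0]; exact hmono hc'mem.1)]
  -- right-hand side
  have hRHS : stieltjesMeasure (contPart g a) (Set.Ioc c d ∩ Set.Ico a t)
      = ENNReal.ofReal (contPart g a (min t (max a d)) - contPart g a (min t (max a c))) := by
    have hsub1 : Set.Ioo (min t (max a c)) (min t (max a d)) ⊆ Set.Ioc c d ∩ Set.Ico a t := by
      rintro x ⟨hx1, hx2⟩
      have hxt : x < t := lt_of_lt_of_le hx2 (min_le_left _ _)
      have hxa : a ≤ x := le_of_lt (lt_of_le_of_lt hc'mem.1 hx1)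
      have hxd : x ≤ d := by
        rcases le_or_gt a d with had | had
        · have hdd : min t (max a d) ≤ d := le_trans (min_le_right _ _)
            (le_of_eq (max_eq_right had))
          exact le_of_lt (lt_of_lt_of_le hx2 hdd)
        · exfalso
          have hd' : min t (max a d) = a := by rw [max_eq_left had.le, min_eq_right ht.1]
          rw [hd'] at hx2
          exact absurd hx2 (not_lt.2 hxa)
      have hxc : c < x := by
        rcases le_or_gt c a with hca | hca
        · exact lt_of_le_of_lt (hca.trans hc'mem.1) hx1
        · rcases le_or_gt c t with hct | hct
          · have hc' : min t (max a c) = c := by rw [max_eq_right hca.le, min_eq_right hct]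
            rw [hc'] at hx1
            exact hx1
          · exfalso
            have hc' : min t (max a c) = t :=
              min_eq_left (hct.le.trans (le_max_right a c))
            rw [hc'] at hx1
            exact absurd hxt (not_lt.2 hx1.le)
      exact ⟨⟨hxc, hxd⟩, hxa, hxt⟩
    have hsub2 : Set.Ioc c d ∩ Set.Ico a t
        ⊆ Set.Icc (min t (max a c)) (min t (max a d)) := by
      rintro x ⟨⟨hxc, hxd⟩, hxa, hxt⟩
      exact ⟨le_trans (min_le_right t (max a c)) (max_le hxa hxc.le),
        le_min hxt.le (hxd.trans (le_max_right a d))⟩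
    apply le_antisymm
    · exact (measure_mono hsub2).trans_eq (measC_Icc hg a)
    · exact le_trans (le_of_eq (measC_Ioo hg a).symm) (measure_mono hsub1)
  rw [hLHS, Measure.restrict_apply' measurableSet_Ico, hRHS]

end Stmt6Aux

open Stmt6Aux

/-- change of variables via the pseudo-inverse of the continuous part:
`∫_{[a,t)} f dμ_{g^C} = ∫_{[0, g^C(t))} (f ∘ γ) dμ` with `μ` the Lebesgue measure. -/
theorem stmt6 {𝕜 : Type*} [RCLike 𝕜] (g : ℝ → ℝ) (hg : IsDerivator g) (a b : ℝ) (hab : a ≤ b)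
    (hga : g a = 0) (f : ℝ → 𝕜)
    (hf : MeasureTheory.IntegrableOn f (Set.Ico a b) (stieltjesMeasure g))
    (t : ℝ) (ht : t ∈ Set.Icc a b) :
    ∫ x in Set.Ico a t, f x ∂(stieltjesMeasure (contPart g a)) =
      ∫ x in Set.Ico 0 (contPart g a t), f (pseudoInv g a b x) := by
  have hmap := map_measure_eq hg a b hab hga ht
  have hγmeas : Measurable (clampInv g a b) := (clampInv_mono hg a b hab hga).measurable
  have hfm : AEStronglyMeasurable f
      ((stieltjesMeasure (contPart g a)).restrict (Set.Ico a t)) :=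
    hf.1.mono_measure
      (Measure.restrict_mono (Set.Ico_subset_Ico le_rfl ht.2) (stieltjesMeasure_contPart_le hg a))
  rw [show (∫ x in Set.Ico a t, f x ∂(stieltjesMeasure (contPart g a)))
      = ∫ x, f x ∂((stieltjesMeasure (contPart g a)).restrict (Set.Ico a t)) from rfl,
    ← hmap, integral_map hγmeas.aemeasurable (hmap ▸ hfm)]
  exact setIntegral_congr_fun measurableSet_Ico fun x hx => by
    rw [clampInv_eq hg a b hab ht hx]
end

section
/- Let g be a derivator on [a,b] and f : [a,b] → 𝔽 be g-continuous on [a,b]. Then: (1) f is left-continuous at every t₀ ∈ (a,b]; (2) if g is continuous at t₀ ∈ [a,b), then f is continuous at t₀; (3) if g is constant on a subinterval [α,β] ⊆ [a,b], then f is constant on [α,β]. -/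
open MeasureTheory Set Function Filter Topology

/-!
A `g`-continuous function satisfies `f u → f t` whenever `g u → g t`, so `f` inherits every
one-sided continuity of `g`, and it cannot separate two points at which `g` takes the same value.
-/

namespace GContWithin

variable {E : Type*} [NormedAddCommGroup E] {g : ℝ → ℝ} {f : ℝ → E} {s : Set ℝ} {t : ℝ}

theorem tendsto {l : Filter ℝ} (hf : GContWithin g f s t) (hl : l ≤ 𝓟 s)
    (hg : Tendsto g l (𝓝 (g t))) : Tendsto f l (𝓝 (f t)) := by
  rw [Metric.tendsto_nhds] at hg ⊢
  intro ε hε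
  obtain ⟨δ, hδ, hfδ⟩ := hf ε hε
  filter_upwards [hg δ hδ, hl (mem_principal_self s)] with u hu hus
  rw [dist_comm, dist_eq_norm]
  exact hfδ u hus (by rwa [← Real.dist_eq, dist_comm])

theorem continuousWithinAt_of_subset {s' : Set ℝ} (hf : GContWithin g f s t) (hs' : s' ⊆ s)
    (hg : ContinuousWithinAt g s' t) : ContinuousWithinAt f s' t :=
  hf.tendsto (inf_le_right.trans (principal_mono.2 hs')) hg

theorem apply_eq_of_apply_eq (hf : GContWithin g f s t) {u : ℝ} (hu : u ∈ s)
    (hgu : g t = g u) : f t = f u := by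
  by_contra hne
  obtain ⟨δ, hδ, hfδ⟩ := hf ‖f t - f u‖ (norm_pos_iff.2 (sub_ne_zero.2 hne))
  exact (hfδ u hu (by simpa [hgu] using hδ)).false

end GContWithin

theorem stmt7_general {E : Type*} [NormedAddCommGroup E] (g : ℝ → ℝ) (hg : IsDerivator g)
    (a b : ℝ) (f : ℝ → E) (hf : GContOn g f (Set.Icc a b)) :
    (∀ t₀ ∈ Set.Ioc a b, ContinuousWithinAt f (Set.Icc a b ∩ Set.Iio t₀) t₀) ∧
    (∀ t₀ ∈ Set.Ico a b, ContinuousWithinAt g (Set.Icc a b) t₀ →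
      ContinuousWithinAt f (Set.Icc a b) t₀) ∧
    (∀ α β : ℝ, a ≤ α → α ≤ β → β ≤ b →
      (∀ u ∈ Set.Icc α β, ∀ v ∈ Set.Icc α β, g u = g v) →
      ∀ u ∈ Set.Icc α β, ∀ v ∈ Set.Icc α β, f u = f v) := by
  refine ⟨fun t₀ ht₀ => ?_, fun t₀ ht₀ hgt₀ => ?_, fun α β hα _ hβ hconst u hu v hv => ?_⟩
  · exact (hf t₀ (Ioc_subset_Icc_self ht₀)).continuousWithinAt_of_subset inter_subset_left
      ((hg.2 t₀).mono (inter_subset_right.trans Iio_subset_Iic_self))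
  · exact (hf t₀ (Ico_subset_Icc_self ht₀)).continuousWithinAt_of_subset subset_rfl hgt₀
  · have hsub : Icc α β ⊆ Icc a b := Icc_subset_Icc hα hβ
    exact (hf u (hsub hu)).apply_eq_of_apply_eq (hsub hv) (hconst u hu v hv)

/-- a `g`-continuous function on `[a,b]` is (1) left-continuous on `(a,b]`;
(2) continuous at any `t₀ ∈ [a,b)` where `g` is continuous; (3) constant on any subinterval
where `g` is constant. -/
theorem stmt7 {E : Type*} [NormedAddCommGroup E] (g : ℝ → ℝ) (hg : IsDerivator g)
    (a b : ℝ) (hab : a ≤ b) (f : ℝ → E) (hf : GContOn g f (Set.Icc a b)) :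
    (∀ t₀ ∈ Set.Ioc a b, ContinuousWithinAt f (Set.Icc a b ∩ Set.Iio t₀) t₀) ∧
    (∀ t₀ ∈ Set.Ico a b, ContinuousWithinAt g (Set.Icc a b) t₀ →
      ContinuousWithinAt f (Set.Icc a b) t₀) ∧
    (∀ α β : ℝ, a ≤ α → α ≤ β → β ≤ b →
      (∀ u ∈ Set.Icc α β, ∀ v ∈ Set.Icc α β, g u = g v) →
      ∀ u ∈ Set.Icc α β, ∀ v ∈ Set.Icc α β, f u = f v) :=
  stmt7_general g hg a b f hf
end

section
/- Let g be a derivator on [a,b] with a ∉ N_g⁻ and b ∉ C_g ∪ N_g⁺ ∪ D_g. The space BC¹_g([a,b]; 𝔽) of bounded continuously g-differentiable functions, equipped with the norm ‖f‖₁ = ‖f‖₀ + ‖f'_g‖₀ (sup norms), is a Banach space. -/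
open MeasureTheory Set Function Filter Topology

/-- Membership in `BC¹_g([a,b]; E)`: `f` is bounded and `g`-continuous on `[a,b]`, is
`g`-differentiable at every point of `[a,b]` with derivative `h`, and `h` is bounded and
`g`-continuous on `[a,b]`. -/
def MemBC1g {E : Type*} [NormedAddCommGroup E] [NormedSpace ℝ E] (g : ℝ → ℝ)
    (a b : ℝ) (f h : ℝ → E) : Prop :=
  GContOn g f (Set.Icc a b) ∧ (∃ M, ∀ x ∈ Set.Icc a b, ‖f x‖ ≤ M) ∧
    GContOn g h (Set.Icc a b) ∧ (∃ M, ∀ x ∈ Set.Icc a b, ‖h x‖ ≤ M) ∧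
    ∀ x ∈ Set.Icc a b, HasGDerivWithinAt g f (Set.Icc a b) x (h x)

set_option linter.unusedSectionVars false
section MyAux

variable {E : Type*} [NormedAddCommGroup E] [NormedSpace ℝ E]

/-- If `g v = g t`, `g`-continuity forces `φ v = φ t`. -/
lemma gcont_eq_of_eq (g : ℝ → ℝ) {φ : ℝ → E} {s : Set ℝ} {t v : ℝ}
    (hφ : GContWithin g φ s t) (hv : v ∈ s) (hgv : g v = g t) : φ v = φ t := by
  by_contra hne
  have hpos : 0 < ‖φ t - φ v‖ := by
    rw [norm_pos_iff, sub_ne_zero]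
    exact fun e => hne e.symm
  obtain ⟨δ, hδ, hδ'⟩ := hφ _ hpos
  have := hδ' v hv (by rw [hgv, sub_self, abs_zero]; exact hδ)
  exact absurd this (lt_irrefl _)

lemma GContOn.sub' {g : ℝ → ℝ} {φ ψ : ℝ → E} {s : Set ℝ}
    (hφ : GContOn g φ s) (hψ : GContOn g ψ s) :
    GContOn g (fun u => φ u - ψ u) s := by
  intro t ht ε hε
  obtain ⟨δ1, hδ1, h1⟩ := hφ t ht (ε/2) (by linarith)
  obtain ⟨δ2, hδ2, h2⟩ := hψ t ht (ε/2) (by linarith)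
  refine ⟨min δ1 δ2, lt_min hδ1 hδ2, fun u hu hgu => ?_⟩
  have e1 := h1 u hu (lt_of_lt_of_le hgu (min_le_left _ _))
  have e2 := h2 u hu (lt_of_lt_of_le hgu (min_le_right _ _))
  have harr : (φ t - ψ t) - (φ u - ψ u) = (φ t - φ u) - (ψ t - ψ u) := by abel
  rw [harr]
  calc ‖(φ t - φ u) - (ψ t - ψ u)‖ ≤ ‖φ t - φ u‖ + ‖ψ t - ψ u‖ := norm_sub_le _ _
    _ < ε := by linarith

lemma HasGDerivWithinAt.sub' {g : ℝ → ℝ} {φ ψ : ℝ → E} {s : Set ℝ} {t : ℝ} {L L' : E}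
    (hφ : HasGDerivWithinAt g φ s t L) (hψ : HasGDerivWithinAt g ψ s t L') :
    HasGDerivWithinAt g (fun u => φ u - ψ u) s t (L - L') := by
  unfold HasGDerivWithinAt at *
  split_ifs at * with h1 h2 <;>
  · refine Tendsto.congr (fun u => ?_) (hφ.sub hψ)
    rw [← smul_sub]
    congr 1
    exact sub_sub_sub_comm _ _ _ _

lemma le_limit_aux {A B C : ℝ} (hC : 0 ≤ C) (h : ∀ η > (0:ℝ), A ≤ (B + η) * C + η) :
    A ≤ B * C := by
  by_contra hA
  push_neg at hA
  set η := (A - B * C) / (2 * (C + 1)) with hηdef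
  have hηpos : 0 < η := div_pos (by linarith) (by linarith)
  have h2 := h η hηpos
  have hη : η * (C + 1) = (A - B * C) / 2 := by
    rw [hηdef]; field_simp
  nlinarith

end MyAux

lemma mvt_g {E : Type*} [NormedAddCommGroup E] [NormedSpace ℝ E]
    (g : ℝ → ℝ) (hg : IsDerivator g) (a b : ℝ)
    (φ ψ : ℝ → E) (hφ : GContOn g φ (Set.Icc a b))
    (hder : ∀ x ∈ Set.Icc a b, HasGDerivWithinAt g φ (Set.Icc a b) x (ψ x))
    (M : ℝ) (hM0 : 0 ≤ M) (hMb : ∀ x ∈ Set.Icc a b, ‖ψ x‖ ≤ M)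
    {s u : ℝ} (hs : s ∈ Set.Icc a b) (hu : u ∈ Set.Icc a b) (hsu : s ≤ u)
    {ε : ℝ} (hε : 0 < ε) :
    ‖φ u - φ s‖ ≤ (M + ε) * (g u - g s) + ε := by
  set P : ℝ → Prop := fun v => ‖φ v - φ s‖ ≤ (M + ε) * (g v - g s) + ε with hP
  set A : Set ℝ := {w | w ∈ Set.Icc s b ∧ ∀ v ∈ Set.Icc s w, P v} with hA
  have hPs : P s := by
    simp only [hP, sub_self, norm_zero, mul_zero, zero_add]
    exact hε.le
  have hsA : s ∈ A := by
    refine ⟨⟨le_refl s, hs.2⟩, fun v hv => ?_⟩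
    have : v = s := le_antisymm hv.2 hv.1
    rwa [this]
  have bddA : BddAbove A := ⟨b, fun w hw => hw.1.2⟩
  have hAne : A.Nonempty := ⟨s, hsA⟩
  set c := sSup A with hc
  have hsc : s ≤ c := le_csSup bddA hsA
  have hcb : c ≤ b := csSup_le hAne (fun w hw => hw.1.2)
  have hcI : c ∈ Set.Icc a b := ⟨hs.1.trans hsc, hcb⟩
  have Pbelow : ∀ v, s ≤ v → v < c → P v := by
    intro v hv hvc
    obtain ⟨w, hwA, hvw⟩ := exists_lt_of_lt_csSup hAne hvc
    exact hwA.2 v ⟨hv, hvw.le⟩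
  have Pc : P c := by
    rcases eq_or_lt_of_le hsc with heq | hlt
    · rw [← heq]; exact hPs
    · apply le_of_forall_pos_le_add
      intro η hη
      obtain ⟨δ, hδ, hδ'⟩ := hφ c hcI η hη
      have hlc : Filter.Tendsto g (nhdsWithin c (Set.Iic c)) (nhds (g c)) := hg.2 c
      have hev1 : ∀ᶠ v in nhdsWithin c (Set.Iio c), |g c - g v| < δ := by
        have h0 : ∀ᶠ v in nhdsWithin c (Set.Iic c), |g c - g v| < δ := by
          have := hlc (Metric.ball_mem_nhds (g c) hδ)
          refine Filter.eventually_iff_exists_mem.mpr ⟨_, this, fun v hv => ?_⟩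
          have : dist (g v) (g c) < δ := hv
          rwa [Real.dist_eq, abs_sub_comm] at this
        exact h0.filter_mono (nhdsWithin_mono c Set.Iio_subset_Iic_self)
      have hev2 : ∀ᶠ v in nhdsWithin c (Set.Iio c), s < v :=
        (eventually_gt_nhds hlt).filter_mono nhdsWithin_le_nhds
      have : (nhdsWithin c (Set.Iio c)).NeBot := inferInstance
      obtain ⟨v, hv1, hv2, hv3⟩ := (hev1.and (hev2.and eventually_mem_nhdsWithin)).exists
      have hvc : v < c := hv3
      have hvI : v ∈ Set.Icc a b := ⟨hs.1.trans hv2.le, hvc.le.trans hcb⟩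
      have e1 : ‖φ c - φ v‖ < η := hδ' v hvI hv1
      have e2 : P v := Pbelow v hv2.le hvc
      have hgm : g v ≤ g c := hg.1 hvc.le
      have tri : ‖φ c - φ s‖ ≤ ‖φ c - φ v‖ + ‖φ v - φ s‖ := by
        have : φ c - φ s = (φ c - φ v) + (φ v - φ s) := by abel
        rw [this]; exact norm_add_le _ _
      simp only [hP] at e2 ⊢
      nlinarith
  -- key local extension bound at c, assuming c < b
  have hkey : c < b → ∃ δ > (0:ℝ), ∀ v ∈ Set.Icc a b, c < v → v < c + δ →
      ‖φ v - φ c‖ ≤ (M + ε) * (g v - g c) := by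
    intro hcb'
    have triv : ∀ v ∈ Set.Icc a b, g v = g c → ‖φ v - φ c‖ ≤ (M + ε) * (g v - g c) := by
      intro v hvI hgv
      have : φ v = φ c := gcont_eq_of_eq g (hφ c hcI) hvI hgv
      rw [this, sub_self, norm_zero, hgv, sub_self, mul_zero]
    have hd := hder c hcI
    unfold HasGDerivWithinAt at hd
    split_ifs at hd with h1 h2
    · -- c ∈ Dg g
      have hb : ∀ᶠ v in nhdsWithin c (Set.Icc a b ∩ Set.Ioi c),
          ‖(g v - g c)⁻¹ • (φ v - φ c)‖ < M + ε := by
        have := hd (Metric.ball_mem_nhds (ψ c) hε)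
        refine Filter.eventually_iff_exists_mem.mpr ⟨_, this, fun v hv => ?_⟩
        have hdist : dist ((g v - g c)⁻¹ • (φ v - φ c)) (ψ c) < ε := hv
        have := hMb c hcI
        calc ‖(g v - g c)⁻¹ • (φ v - φ c)‖
            ≤ ‖(g v - g c)⁻¹ • (φ v - φ c) - ψ c‖ + ‖ψ c‖ := by simpa using norm_add_le ((g v - g c)⁻¹ • (φ v - φ c) - ψ c) (ψ c)
          _ < M + ε := by rw [← dist_eq_norm] at *; linarith
      rw [eventually_nhdsWithin_iff, Metric.eventually_nhds_iff] at hb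
      obtain ⟨δ, hδ, hδ'⟩ := hb
      refine ⟨δ, hδ, fun v hvI hcv hvδ => ?_⟩
      rcases eq_or_ne (g v) (g c) with he | he
      · exact triv v hvI he
      · have hq := hδ' (show dist v c < δ by rw [Real.dist_eq, abs_of_pos (by linarith)]; linarith)
          ⟨hvI, hcv⟩
        have hgv : g c < g v := lt_of_le_of_ne (hg.1 hcv.le) (Ne.symm he)
        have hnorm : ‖(g v - g c)⁻¹ • (φ v - φ c)‖ = (g v - g c)⁻¹ * ‖φ v - φ c‖ := by
          rw [norm_smul, Real.norm_eq_abs, abs_inv, abs_of_pos (by linarith)]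
        rw [hnorm] at hq
        have hpos : 0 < g v - g c := by linarith
        have := (inv_mul_le_iff₀ hpos).mp hq.le
        linarith [this]
    · -- InCg g c
      obtain ⟨ε', hε', hconst⟩ := h2
      refine ⟨ε', hε', fun v hvI hcv hvδ => ?_⟩
      have hgv : g v = g c :=
        hconst v ⟨by linarith, by linarith⟩ c ⟨by linarith, by linarith⟩
      exact triv v hvI hgv
    · -- the remaining case
      have hb : ∀ᶠ v in nhdsWithin c (Set.Icc a b ∩ {u | g u ≠ g c}),
          ‖(g v - g c)⁻¹ • (φ v - φ c)‖ < M + ε := by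
        have := hd (Metric.ball_mem_nhds (ψ c) hε)
        refine Filter.eventually_iff_exists_mem.mpr ⟨_, this, fun v hv => ?_⟩
        have hdist : dist ((g v - g c)⁻¹ • (φ v - φ c)) (ψ c) < ε := hv
        have := hMb c hcI
        calc ‖(g v - g c)⁻¹ • (φ v - φ c)‖
            ≤ ‖(g v - g c)⁻¹ • (φ v - φ c) - ψ c‖ + ‖ψ c‖ := by simpa using norm_add_le ((g v - g c)⁻¹ • (φ v - φ c) - ψ c) (ψ c)
          _ < M + ε := by rw [← dist_eq_norm] at *; linarith
      rw [eventually_nhdsWithin_iff, Metric.eventually_nhds_iff] at hb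
      obtain ⟨δ, hδ, hδ'⟩ := hb
      refine ⟨δ, hδ, fun v hvI hcv hvδ => ?_⟩
      rcases eq_or_ne (g v) (g c) with he | he
      · exact triv v hvI he
      · have hq := hδ' (show dist v c < δ by rw [Real.dist_eq, abs_of_pos (by linarith)]; linarith)
          ⟨hvI, he⟩
        have hgv : g c < g v := lt_of_le_of_ne (hg.1 hcv.le) (Ne.symm he)
        have hnorm : ‖(g v - g c)⁻¹ • (φ v - φ c)‖ = (g v - g c)⁻¹ * ‖φ v - φ c‖ := by
          rw [norm_smul, Real.norm_eq_abs, abs_inv, abs_of_pos (by linarith)]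
        rw [hnorm] at hq
        have hpos : 0 < g v - g c := by linarith
        have := (inv_mul_le_iff₀ hpos).mp hq.le
        linarith [this]
  -- u ≤ c, else contradiction
  have huc : u ≤ c := by
    by_contra hcu
    push_neg at hcu
    have hcb' : c < b := lt_of_lt_of_le hcu hu.2
    obtain ⟨δ, hδ, hδ'⟩ := hkey hcb'
    set w := min b (c + δ/2) with hw
    have hcw : c < w := lt_min hcb' (by linarith)
    have hwA : w ∈ A := by
      refine ⟨⟨hsc.trans hcw.le, min_le_left _ _⟩, fun v hv => ?_⟩
      rcases lt_or_ge v c with hvc | hvc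
      · exact Pbelow v hv.1 hvc
      · rcases eq_or_lt_of_le hvc with heq | hlt
        · rw [← heq]; exact Pc
        · have hvI : v ∈ Set.Icc a b :=
            ⟨hs.1.trans hv.1, hv.2.trans (min_le_left _ _)⟩
          have hvδ : v < c + δ := by
            have := hv.2.trans (min_le_right _ _); linarith
          have e1 := hδ' v hvI hlt hvδ
          simp only [hP] at Pc ⊢
          have tri : ‖φ v - φ s‖ ≤ ‖φ v - φ c‖ + ‖φ c - φ s‖ := by
            have : φ v - φ s = (φ v - φ c) + (φ c - φ s) := by abel
            rw [this]; exact norm_add_le _ _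
          nlinarith
    have := le_csSup bddA hwA
    rw [← hc] at this
    linarith
  rcases eq_or_lt_of_le huc with heq | hlt
  · rw [heq]; exact Pc
  · exact Pbelow u hsu hlt

lemma compEnd_mem {g : ℝ → ℝ} {a b x : ℝ} (hx : x ∈ Set.Icc a b) (hxC : InCg g x)
    (hb1 : ¬ InCg g b) : compEnd g x ∈ Set.Icc x b := by
  unfold compEnd
  set T := {u | ∀ v ∈ Set.Icc x u, g v = g x} with hT
  have hxT : x ∈ T := by
    intro v hv
    rw [le_antisymm hv.2 hv.1]
  have hTb : ∀ u ∈ T, u ≤ b := by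
    intro u hu
    by_contra hub
    push_neg at hub
    have hxb : x < b := by
      rcases eq_or_lt_of_le hx.2 with h | h
      · exact absurd (h ▸ hxC) hb1
      · exact h
    apply hb1
    refine ⟨min (b - x) (u - b), lt_min (by linarith) (by linarith), ?_⟩
    intro w hw w' hw'
    have key : ∀ z ∈ Set.Ioo (b - min (b-x) (u-b)) (b + min (b-x) (u-b)), g z = g x := by
      intro z hz
      apply hu
      constructor
      · have h1 := hz.1
        have h2 := min_le_left (b-x) (u-b)
        linarith
      · have h1 := hz.2
        have h2 := min_le_right (b-x) (u-b)
        linarith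
    rw [key w hw, key w' hw']
  constructor
  · exact le_csSup ⟨b, fun u hu => hTb u hu⟩ hxT
  · exact csSup_le ⟨x, hxT⟩ hTb

/-- `BC¹_g([a,b]; E)` with the norm `‖f‖₁ = ‖f‖₀ + ‖f'_g‖₀` is a Banach space:
every sequence in `BC¹_g` that is Cauchy for this norm converges in this norm to an element
of `BC¹_g`. -/
theorem stmt12 {E : Type*} [NormedAddCommGroup E] [NormedSpace ℝ E] [CompleteSpace E]
    (g : ℝ → ℝ) (hg : IsDerivator g) (a b : ℝ) (hab : a ≤ b)
    (ha : ¬ InNgMinus g a) (hb1 : ¬ InCg g b) (hb2 : ¬ InNgPlus g b) (hb3 : b ∉ Dg g)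
    (f h : ℕ → ℝ → E) (hmem : ∀ n, MemBC1g g a b (f n) (h n))
    (hcauchy : ∀ ε > 0, ∃ N, ∀ m ≥ N, ∀ n ≥ N, ∀ x ∈ Set.Icc a b,
      ‖f m x - f n x‖ + ‖h m x - h n x‖ < ε) :
    ∃ F H : ℝ → E, MemBC1g g a b F H ∧
      ∀ ε > 0, ∃ N, ∀ n ≥ N, ∀ x ∈ Set.Icc a b,
        ‖f n x - F x‖ + ‖h n x - H x‖ < ε := by
  classical
  have hNE : Nonempty E := ⟨0⟩
  set F : ℝ → E := fun x => limUnder atTop (fun n => f n x) with hF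
  set H : ℝ → E := fun x => limUnder atTop (fun n => h n x) with hH
  -- pointwise convergence on [a,b]
  have tendF : ∀ x ∈ Set.Icc a b, Tendsto (fun n => f n x) atTop (𝓝 (F x)) := by
    intro x hx
    have hcau : CauchySeq (fun n => f n x) := by
      rw [Metric.cauchySeq_iff]
      intro ε hε
      obtain ⟨N, hN⟩ := hcauchy ε hε
      refine ⟨N, fun m hm n hn => ?_⟩
      rw [dist_eq_norm]
      have h1 := hN m hm n hn x hx
      have h2 := norm_nonneg (h m x - h n x)
      linarith
    obtain ⟨L, hL⟩ := cauchySeq_tendsto_of_complete hcau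
    have : F x = L := by rw [hF]; exact hL.limUnder_eq
    rwa [this]
  have tendH : ∀ x ∈ Set.Icc a b, Tendsto (fun n => h n x) atTop (𝓝 (H x)) := by
    intro x hx
    have hcau : CauchySeq (fun n => h n x) := by
      rw [Metric.cauchySeq_iff]
      intro ε hε
      obtain ⟨N, hN⟩ := hcauchy ε hε
      refine ⟨N, fun m hm n hn => ?_⟩
      rw [dist_eq_norm]
      have h1 := hN m hm n hn x hx
      have h2 := norm_nonneg (f m x - f n x)
      linarith
    obtain ⟨L, hL⟩ := cauchySeq_tendsto_of_complete hcau
    have : H x = L := by rw [hH]; exact hL.limUnder_eq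
    rwa [this]
  -- uniform convergence on [a,b]
  have hconv : ∀ ε > 0, ∃ N, ∀ n ≥ N, ∀ x ∈ Set.Icc a b,
      ‖f n x - F x‖ ≤ ε ∧ ‖h n x - H x‖ ≤ ε := by
    intro ε hε
    obtain ⟨N, hN⟩ := hcauchy ε hε
    refine ⟨N, fun n hn x hx => ⟨?_, ?_⟩⟩
    · have h1 : Tendsto (fun m => ‖f n x - f m x‖) atTop (𝓝 ‖f n x - F x‖) :=
        (tendsto_const_nhds.sub (tendF x hx)).norm
      refine le_of_tendsto h1 (Filter.eventually_atTop.mpr ⟨N, fun m hm => ?_⟩)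
      have := hN n hn m hm x hx
      have := norm_nonneg (h n x - h m x)
      linarith
    · have h1 : Tendsto (fun m => ‖h n x - h m x‖) atTop (𝓝 ‖h n x - H x‖) :=
        (tendsto_const_nhds.sub (tendH x hx)).norm
      refine le_of_tendsto h1 (Filter.eventually_atTop.mpr ⟨N, fun m hm => ?_⟩)
      have := hN n hn m hm x hx
      have := norm_nonneg (f n x - f m x)
      linarith
  -- the uniform mean value estimate
  have est : ∀ ε > 0, ∃ N, ∀ n ≥ N, ∀ p ∈ Set.Icc a b, ∀ u ∈ Set.Icc a b,
      ‖(F u - f n u) - (F p - f n p)‖ ≤ ε * |g u - g p| := by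
    intro ε hε
    obtain ⟨N, hN⟩ := hcauchy (ε/2) (by linarith)
    refine ⟨N, fun n hn p hp u hu => ?_⟩
    have hm : ∀ m ≥ N, ‖(f m u - f n u) - (f m p - f n p)‖ ≤ (ε/2) * |g u - g p| := by
      intro m hm
      have hφc : GContOn g (fun t => f m t - f n t) (Set.Icc a b) :=
        GContOn.sub' (hmem m).1 (hmem n).1
      have hder : ∀ y ∈ Set.Icc a b,
          HasGDerivWithinAt g (fun t => f m t - f n t) (Set.Icc a b) y (h m y - h n y) :=
        fun y hy => HasGDerivWithinAt.sub' ((hmem m).2.2.2.2 y hy) ((hmem n).2.2.2.2 y hy)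
      have hMb : ∀ y ∈ Set.Icc a b, ‖h m y - h n y‖ ≤ ε/2 := by
        intro y hy
        have h1 := hN m hm n hn y hy
        have h2 := norm_nonneg (f m y - f n y)
        linarith
      have main : ∀ η > (0:ℝ),
          ‖(f m u - f n u) - (f m p - f n p)‖ ≤ (ε/2 + η) * |g u - g p| + η := by
        intro η hη
        rcases le_total p u with hpu | hup
        · have hmono : g p ≤ g u := hg.1 hpu
          have := mvt_g g hg a b (fun t => f m t - f n t) (fun y => h m y - h n y)
            hφc hder (ε/2) (by linarith) hMb hp hu hpu hη
          have habs : |g u - g p| = g u - g p := abs_of_nonneg (by linarith)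
          rw [habs]
          exact this
        · have hmono : g u ≤ g p := hg.1 hup
          have := mvt_g g hg a b (fun t => f m t - f n t) (fun y => h m y - h n y)
            hφc hder (ε/2) (by linarith) hMb hu hp hup hη
          have habs : |g u - g p| = g p - g u := by
            rw [abs_sub_comm]; exact abs_of_nonneg (by linarith)
          rw [habs]
          have hrev : ‖(f m u - f n u) - (f m p - f n p)‖
              = ‖(f m p - f n p) - (f m u - f n u)‖ := norm_sub_rev _ _
          rw [hrev]
          exact this
      exact le_limit_aux (abs_nonneg (g u - g p)) main
    have h1 : Tendsto (fun m => ‖(f m u - f n u) - (f m p - f n p)‖) atTop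
        (𝓝 ‖(F u - f n u) - (F p - f n p)‖) :=
      (((tendF u hu).sub tendsto_const_nhds).sub ((tendF p hp).sub tendsto_const_nhds)).norm
    have h2 := le_of_tendsto h1 (Filter.eventually_atTop.mpr ⟨N, hm⟩)
    nlinarith [abs_nonneg (g u - g p)]
  -- the key limit-exchange step
  have key : ∀ p ∈ Set.Icc a b, ∀ S : Set ℝ, S ⊆ Set.Icc a b → ∀ x ∈ Set.Icc a b,
      (∀ n, Tendsto (fun u => (g u - g p)⁻¹ • (f n u - f n p)) (𝓝[S] p) (𝓝 (h n x))) →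
      Tendsto (fun u => (g u - g p)⁻¹ • (F u - F p)) (𝓝[S] p) (𝓝 (H x)) := by
    intro p hp S hS x hx hq
    rw [Metric.tendsto_nhds]
    intro ε hε
    obtain ⟨N1, hN1⟩ := est (ε/4) (by linarith)
    obtain ⟨N2, hN2⟩ := hconv (ε/4) (by linarith)
    set n := max N1 N2 with hn
    have hev := Metric.tendsto_nhds.mp (hq n) (ε/4) (by linarith)
    filter_upwards [hev, self_mem_nhdsWithin] with u hu1 hu2
    have huI : u ∈ Set.Icc a b := hS hu2
    have hquot : ‖(g u - g p)⁻¹ • (F u - F p) - (g u - g p)⁻¹ • (f n u - f n p)‖ ≤ ε/4 := by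
      rw [← smul_sub]
      have hest := hN1 n (le_max_left _ _) p hp u huI
      have harr : (F u - F p) - (f n u - f n p) = (F u - f n u) - (F p - f n p) := by abel
      rw [harr, norm_smul, Real.norm_eq_abs, abs_inv]
      rcases eq_or_ne (g u) (g p) with he | he
      · have h0 : ‖(F u - f n u) - (F p - f n p)‖ = 0 := by
          refine le_antisymm (hest.trans ?_) (norm_nonneg _)
          rw [he, sub_self, abs_zero, mul_zero]
        rw [h0, mul_zero]
        linarith
      · have habs : 0 < |g u - g p| := abs_pos.mpr (sub_ne_zero.mpr he)
        calc |g u - g p|⁻¹ * ‖(F u - f n u) - (F p - f n p)‖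
            ≤ |g u - g p|⁻¹ * (ε/4 * |g u - g p|) :=
              mul_le_mul_of_nonneg_left hest (inv_nonneg.mpr (abs_nonneg _))
          _ = ε/4 := by field_simp
    have hHx : ‖h n x - H x‖ ≤ ε/4 := (hN2 n (le_max_right _ _) x hx).2
    rw [dist_eq_norm] at hu1 ⊢
    have tri : ‖(g u - g p)⁻¹ • (F u - F p) - H x‖
        ≤ ‖(g u - g p)⁻¹ • (F u - F p) - (g u - g p)⁻¹ • (f n u - f n p)‖
          + ‖(g u - g p)⁻¹ • (f n u - f n p) - h n x‖ + ‖h n x - H x‖ := by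
      have e : (g u - g p)⁻¹ • (F u - F p) - H x =
          ((g u - g p)⁻¹ • (F u - F p) - (g u - g p)⁻¹ • (f n u - f n p))
          + ((g u - g p)⁻¹ • (f n u - f n p) - h n x) + (h n x - H x) := by abel
      rw [e]
      exact norm_add₃_le
    linarith
  refine ⟨F, H, ⟨?_, ?_, ?_, ?_, ?_⟩, ?_⟩
  · -- GContOn g F
    intro t ht ε hε
    obtain ⟨N, hN⟩ := hconv (ε/4) (by linarith)
    obtain ⟨δ, hδ, hδ'⟩ := (hmem N).1 t ht (ε/4) (by linarith)
    refine ⟨δ, hδ, fun u hu hgu => ?_⟩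
    have e1 := (hN N (le_refl N) t ht).1
    have e2 := (hN N (le_refl N) u hu).1
    have e3 := hδ' u hu hgu
    have tri : ‖F t - F u‖ ≤ ‖F t - f N t‖ + ‖f N t - f N u‖ + ‖f N u - F u‖ := by
      have e : F t - F u = (F t - f N t) + (f N t - f N u) + (f N u - F u) := by abel
      rw [e]; exact norm_add₃_le
    have r1 : ‖F t - f N t‖ = ‖f N t - F t‖ := norm_sub_rev _ _
    have r2 : ‖f N u - F u‖ = ‖f N u - F u‖ := rfl
    linarith [tri, r1]
  · -- F bounded
    obtain ⟨N, hN⟩ := hconv 1 one_pos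
    obtain ⟨M₀, hM₀⟩ := (hmem N).2.1
    refine ⟨M₀ + 1, fun x hx => ?_⟩
    have e1 := (hN N (le_refl N) x hx).1
    have e2 := hM₀ x hx
    calc ‖F x‖ = ‖(F x - f N x) + f N x‖ := by rw [sub_add_cancel]
      _ ≤ ‖F x - f N x‖ + ‖f N x‖ := norm_add_le _ _
      _ ≤ M₀ + 1 := by rw [norm_sub_rev]; linarith
  · -- GContOn g H
    intro t ht ε hε
    obtain ⟨N, hN⟩ := hconv (ε/4) (by linarith)
    obtain ⟨δ, hδ, hδ'⟩ := (hmem N).2.2.1 t ht (ε/4) (by linarith)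
    refine ⟨δ, hδ, fun u hu hgu => ?_⟩
    have e1 := (hN N (le_refl N) t ht).2
    have e2 := (hN N (le_refl N) u hu).2
    have e3 := hδ' u hu hgu
    have tri : ‖H t - H u‖ ≤ ‖H t - h N t‖ + ‖h N t - h N u‖ + ‖h N u - H u‖ := by
      have e : H t - H u = (H t - h N t) + (h N t - h N u) + (h N u - H u) := by abel
      rw [e]; exact norm_add₃_le
    have r1 : ‖H t - h N t‖ = ‖h N t - H t‖ := norm_sub_rev _ _
    linarith [tri, r1]
  · -- H bounded
    obtain ⟨N, hN⟩ := hconv 1 one_pos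
    obtain ⟨M₀, hM₀⟩ := (hmem N).2.2.2.1
    refine ⟨M₀ + 1, fun x hx => ?_⟩
    have e1 := (hN N (le_refl N) x hx).2
    have e2 := hM₀ x hx
    calc ‖H x‖ = ‖(H x - h N x) + h N x‖ := by rw [sub_add_cancel]
      _ ≤ ‖H x - h N x‖ + ‖h N x‖ := norm_add_le _ _
      _ ≤ M₀ + 1 := by rw [norm_sub_rev]; linarith
  · -- the derivative
    intro x hx
    have hd : ∀ n, HasGDerivWithinAt g (f n) (Set.Icc a b) x (h n x) :=
      fun n => (hmem n).2.2.2.2 x hx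
    unfold HasGDerivWithinAt at hd ⊢
    by_cases h1 : x ∈ Dg g
    · rw [if_pos h1]
      have hq : ∀ n, Tendsto (fun u => (g u - g x)⁻¹ • (f n u - f n x))
          (𝓝[Set.Icc a b ∩ Set.Ioi x] x) (𝓝 (h n x)) := by
        intro n
        have := hd n
        rwa [if_pos h1] at this
      exact key x hx _ Set.inter_subset_left x hx hq
    · rw [if_neg h1]
      by_cases h2 : InCg g x
      · rw [if_pos h2]
        have hpI : compEnd g x ∈ Set.Icc a b := by
          have hce := compEnd_mem hx h2 hb1
          exact ⟨hx.1.trans hce.1, hce.2⟩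
        have hq : ∀ n, Tendsto (fun u => (g u - g (compEnd g x))⁻¹ • (f n u - f n (compEnd g x)))
            (𝓝[Set.Icc a b ∩ Set.Ioi (compEnd g x)] (compEnd g x)) (𝓝 (h n x)) := by
          intro n
          have := hd n
          rwa [if_neg h1, if_pos h2] at this
        exact key _ hpI _ Set.inter_subset_left x hx hq
      · rw [if_neg h2]
        have hq : ∀ n, Tendsto (fun u => (g u - g x)⁻¹ • (f n u - f n x))
            (𝓝[Set.Icc a b ∩ {u | g u ≠ g x}] x) (𝓝 (h n x)) := by
          intro n
          have := hd n
          rwa [if_neg h1, if_neg h2] at this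
        exact key x hx _ Set.inter_subset_left x hx hq
  · -- convergence in the BC¹ norm
    intro ε hε
    obtain ⟨N, hN⟩ := hconv (ε/4) (by linarith)
    refine ⟨N, fun n hn x hx => ?_⟩
    have := hN n hn x hx
    have h1 := this.1
    have h2 := this.2
    linarith
end

section
/- Let f₁ ∈ BC¹_g([a,b]) be additionally continuous (in the usual sense) on [a,b], and f₂ ∈ BC¹_g([a,b]). Then f₁f₂ ∈ BC¹_g([a,b]) and (f₁f₂)'_g(x) = (f₁)'_g(x) f₂(x) + (f₂)'_g(x) f₁(x) for every x ∈ [a,b]. -/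
open MeasureTheory Set Function Filter Topology

section Helpers

open Filter Set Function Topology

variable {𝕜 : Type*} [RCLike 𝕜]

lemma gcont_eq (g : ℝ → ℝ) (f : ℝ → 𝕜) (s : Set ℝ) (t : ℝ)
    (h : GContWithin g f s t) (c : ℝ) (hc : c ∈ s) (hgc : g c = g t) : f c = f t := by
  by_contra hne
  have hpos : 0 < ‖f t - f c‖ := by
    rw [norm_pos_iff, sub_ne_zero]
    exact fun h' => hne h'.symm
  obtain ⟨δ, hδ, hδ'⟩ := h _ hpos
  have := hδ' c hc (by rw [hgc]; simpa using hδ)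
  exact lt_irrefl _ this

lemma gcont_mul_aux (g : ℝ → ℝ) (s : Set ℝ) (u v : ℝ → 𝕜)
    (hu : GContOn g u s) (hv : GContOn g v s)
    (M : ℝ) (hM1 : (1:ℝ) ≤ M)
    (hub : ∀ x ∈ s, ‖u x‖ ≤ M) (hvb : ∀ x ∈ s, ‖v x‖ ≤ M) :
    GContOn g (fun x => u x * v x) s := by
  have hM0 : (0:ℝ) < M := lt_of_lt_of_le one_pos hM1
  intro t ht ε hε
  have hε' : 0 < ε / (2 * M) := by positivity
  obtain ⟨δ₁, hδ₁, h₁⟩ := hu t ht (ε / (2*M)) hε'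
  obtain ⟨δ₂, hδ₂, h₂⟩ := hv t ht (ε / (2*M)) hε'
  refine ⟨min δ₁ δ₂, lt_min hδ₁ hδ₂, fun w hw hgw => ?_⟩
  have e1 := h₁ w hw (lt_of_lt_of_le hgw (min_le_left _ _))
  have e2 := h₂ w hw (lt_of_lt_of_le hgw (min_le_right _ _))
  have key : u t * v t - u w * v w = (u t - u w) * v t + u w * (v t - v w) := by ring
  calc ‖u t * v t - u w * v w‖
      ≤ ‖(u t - u w) * v t‖ + ‖u w * (v t - v w)‖ := by rw [key]; exact norm_add_le _ _
    _ = ‖u t - u w‖ * ‖v t‖ + ‖u w‖ * ‖v t - v w‖ := by rw [norm_mul, norm_mul]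
    _ ≤ ‖u t - u w‖ * M + M * ‖v t - v w‖ := by
        gcongr
        · exact hvb t ht
        · exact hub w hw
    _ < (ε / (2*M)) * M + M * (ε / (2*M)) := by
        exact add_lt_add (mul_lt_mul_of_pos_right e1 hM0) (mul_lt_mul_of_pos_left e2 hM0)
    _ = ε := by field_simp; ring

lemma gcont_add_aux (g : ℝ → ℝ) (s : Set ℝ) (u v : ℝ → 𝕜)
    (hu : GContOn g u s) (hv : GContOn g v s) :
    GContOn g (fun x => u x + v x) s := by
  intro t ht ε hε
  obtain ⟨δ₁, hδ₁, h₁⟩ := hu t ht (ε/2) (by positivity)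
  obtain ⟨δ₂, hδ₂, h₂⟩ := hv t ht (ε/2) (by positivity)
  refine ⟨min δ₁ δ₂, lt_min hδ₁ hδ₂, fun w hw hgw => ?_⟩
  have e1 := h₁ w hw (lt_of_lt_of_le hgw (min_le_left _ _))
  have e2 := h₂ w hw (lt_of_lt_of_le hgw (min_le_right _ _))
  calc ‖u t + v t - (u w + v w)‖ = ‖(u t - u w) + (v t - v w)‖ := by ring_nf
    _ ≤ ‖u t - u w‖ + ‖v t - v w‖ := norm_add_le _ _
    _ < ε/2 + ε/2 := add_lt_add e1 e2
    _ = ε := by ring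

lemma keyProd (g : ℝ → ℝ) (hg : IsDerivator g) (a b : ℝ)
    (f₁ f₂ : ℝ → 𝕜) (p : ℝ) (hp : p ∈ Set.Icc a b)
    (M : ℝ) (hf₂b : ∀ x ∈ Set.Icc a b, ‖f₂ x‖ ≤ M)
    (hf₂c : GContWithin g f₂ (Set.Icc a b) p)
    (hcont : ContinuousOn f₁ (Set.Icc a b))
    (D₁ D₂ : 𝕜)
    (h₁ : Tendsto (fun u => (g u - g p)⁻¹ • (f₁ u - f₁ p))
      (𝓝[Set.Icc a b ∩ Set.Ioi p] p) (𝓝 D₁))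
    (h₂ : Tendsto (fun u => (g u - g p)⁻¹ • (f₂ u - f₂ p))
      (𝓝[Set.Icc a b ∩ Set.Ioi p] p) (𝓝 D₂)) :
    Tendsto (fun u => (g u - g p)⁻¹ • (f₁ u * f₂ u - f₁ p * f₂ p))
      (𝓝[Set.Icc a b ∩ Set.Ioi p] p) (𝓝 (D₁ * f₂ p + D₂ * f₁ p)) := by
  set F := 𝓝[Set.Icc a b ∩ Set.Ioi p] p with hFdef
  by_cases hF : F.NeBot
  swap
  · rw [not_neBot] at hF
    rw [hF]
    exact tendsto_bot
  have hid : (fun u => (g u - g p)⁻¹ • (f₁ u * f₂ u - f₁ p * f₂ p)) =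
      fun u => ((g u - g p)⁻¹ • (f₁ u - f₁ p)) * f₂ u
        + f₁ p * ((g u - g p)⁻¹ • (f₂ u - f₂ p)) := by
    funext u
    simp only [RCLike.real_smul_eq_coe_mul]
    ring
  rw [hid]
  have hmem : ∀ᶠ u in F, u ∈ Set.Icc a b :=
    (eventually_mem_nhdsWithin).mono (fun u hu => hu.1)
  have main : Tendsto (fun u => ((g u - g p)⁻¹ • (f₁ u - f₁ p)) * f₂ u) F (𝓝 (D₁ * f₂ p)) := by
    by_cases hj : Function.rightLim g p = g p
    · have hgt : Tendsto g F (𝓝 (g p)) := by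
        have h0 := hg.1.tendsto_rightLim p
        rw [hj] at h0
        exact h0.mono_left (nhdsWithin_mono p (fun u hu => hu.2))
      have hf2 : Tendsto f₂ F (𝓝 (f₂ p)) := by
        rw [Metric.tendsto_nhds]
        intro ε hε
        obtain ⟨δ, hδ, hδ'⟩ := hf₂c ε hε
        have h1 : ∀ᶠ u in F, |g p - g u| < δ := by
          filter_upwards [(Metric.tendsto_nhds.mp hgt) δ hδ] with u hu
          rw [Real.dist_eq] at hu
          rw [abs_sub_comm]
          exact hu
        filter_upwards [hmem, h1] with u hu h1u
        rw [dist_eq_norm, norm_sub_rev]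
        exact hδ' u hu h1u
      exact h₁.mul hf2
    · have hle : g p ≤ Function.rightLim g p := hg.1.le_rightLim le_rfl
      have hJ : 0 < Function.rightLim g p - g p := by
        rcases lt_or_eq_of_le hle with h | h
        · linarith
        · exact absurd h.symm hj
      have hf1 : Tendsto (fun u => f₁ u - f₁ p) F (𝓝 0) := by
        have h0 : Tendsto f₁ F (𝓝 (f₁ p)) :=
          (hcont p hp).tendsto.mono_left (nhdsWithin_mono p (fun u hu => hu.1))
        simpa using h0.sub (tendsto_const_nhds (x := f₁ p))
      have hq1 : Tendsto (fun u => (g u - g p)⁻¹ • (f₁ u - f₁ p)) F (𝓝 0) := by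
        apply squeeze_zero_norm' (a := fun u => (Function.rightLim g p - g p)⁻¹ * ‖f₁ u - f₁ p‖)
        · filter_upwards [eventually_mem_nhdsWithin] with u hu
          have hu2 : p < u := hu.2
          have hgu : Function.rightLim g p ≤ g u := hg.1.rightLim_le hu2
          have hpos : 0 < g u - g p := by linarith
          rw [norm_smul, Real.norm_eq_abs, abs_of_pos (inv_pos.mpr hpos)]
          apply mul_le_mul_of_nonneg_right _ (norm_nonneg _)
          exact inv_anti₀ hJ (by linarith)
        · have := (tendsto_const_nhds (x := (Function.rightLim g p - g p)⁻¹)).mul hf1.norm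
          simpa using this
      have hD₁ : D₁ = 0 := tendsto_nhds_unique h₁ hq1
      have hM0 : 0 ≤ M := le_trans (norm_nonneg _) (hf₂b p hp)
      have hz : Tendsto (fun u => ((g u - g p)⁻¹ • (f₁ u - f₁ p)) * f₂ u) F (𝓝 0) := by
        apply squeeze_zero_norm'
          (a := fun u => ‖(g u - g p)⁻¹ • (f₁ u - f₁ p)‖ * M)
        · filter_upwards [hmem] with u hu
          rw [norm_mul]
          exact mul_le_mul_of_nonneg_left (hf₂b u hu) (norm_nonneg _)
        · simpa using hq1.norm.mul_const M
      rw [hD₁]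
      simpa using hz
  have second : Tendsto (fun u => f₁ p * ((g u - g p)⁻¹ • (f₂ u - f₂ p))) F
      (𝓝 (f₁ p * D₂)) := h₂.const_mul _
  have := main.add second
  rw [mul_comm (f₁ p) D₂] at this
  exact this

end Helpers

/-- if `f₁ ∈ BC¹_g([a,b])` is moreover continuous in the usual sense and
`f₂ ∈ BC¹_g([a,b])`, then `f₁f₂ ∈ BC¹_g([a,b])` and
`(f₁f₂)'_g = (f₁)'_g f₂ + (f₂)'_g f₁` everywhere on `[a,b]`. -/
theorem stmt13 {𝕜 : Type*} [RCLike 𝕜] (g : ℝ → ℝ) (hg : IsDerivator g) (a b : ℝ) (hab : a ≤ b)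
    (ha : ¬ InNgMinus g a) (hb1 : ¬ InCg g b) (hb2 : ¬ InNgPlus g b) (hb3 : b ∉ Dg g)
    (f₁ f₂ d₁ d₂ : ℝ → 𝕜)
    (hf₁ : GContOn g f₁ (Set.Icc a b)) (hf₁b : ∃ M, ∀ x ∈ Set.Icc a b, ‖f₁ x‖ ≤ M)
    (hd₁ : GContOn g d₁ (Set.Icc a b)) (hd₁b : ∃ M, ∀ x ∈ Set.Icc a b, ‖d₁ x‖ ≤ M)
    (hder₁ : ∀ x ∈ Set.Icc a b, HasGDerivWithinAt g f₁ (Set.Icc a b) x (d₁ x))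
    (hcont : ContinuousOn f₁ (Set.Icc a b))
    (hf₂ : GContOn g f₂ (Set.Icc a b)) (hf₂b : ∃ M, ∀ x ∈ Set.Icc a b, ‖f₂ x‖ ≤ M)
    (hd₂ : GContOn g d₂ (Set.Icc a b)) (hd₂b : ∃ M, ∀ x ∈ Set.Icc a b, ‖d₂ x‖ ≤ M)
    (hder₂ : ∀ x ∈ Set.Icc a b, HasGDerivWithinAt g f₂ (Set.Icc a b) x (d₂ x)) :
    (∀ x ∈ Set.Icc a b, HasGDerivWithinAt g (fun s => f₁ s * f₂ s) (Set.Icc a b) x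
      (d₁ x * f₂ x + d₂ x * f₁ x)) ∧
    GContOn g (fun s => f₁ s * f₂ s) (Set.Icc a b) ∧
    (∃ M, ∀ x ∈ Set.Icc a b, ‖f₁ x * f₂ x‖ ≤ M) ∧
    GContOn g (fun s => d₁ s * f₂ s + d₂ s * f₁ s) (Set.Icc a b) ∧
    (∃ M, ∀ x ∈ Set.Icc a b, ‖d₁ x * f₂ x + d₂ x * f₁ x‖ ≤ M) := by
  classical
  obtain ⟨M₁, hM₁⟩ := hf₁b
  obtain ⟨M₂, hM₂⟩ := hf₂b
  obtain ⟨Md₁, hMd₁⟩ := hd₁b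
  obtain ⟨Md₂, hMd₂⟩ := hd₂b
  have hane : a ∈ Set.Icc a b := ⟨le_refl a, hab⟩
  have hM₁0 : 0 ≤ M₁ := le_trans (norm_nonneg _) (hM₁ a hane)
  have hM₂0 : 0 ≤ M₂ := le_trans (norm_nonneg _) (hM₂ a hane)
  have hMd₁0 : 0 ≤ Md₁ := le_trans (norm_nonneg _) (hMd₁ a hane)
  have hMd₂0 : 0 ≤ Md₂ := le_trans (norm_nonneg _) (hMd₂ a hane)
  refine ⟨?_, ?_, ?_, ?_, ?_⟩
  · -- the product rule
    intro x hx
    have H₁ := hder₁ x hx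
    have H₂ := hder₂ x hx
    by_cases hDg : x ∈ Dg g
    · rw [HasGDerivWithinAt, if_pos hDg] at H₁ H₂ ⊢
      exact keyProd g hg a b f₁ f₂ x hx M₂ hM₂ (hf₂ x hx) hcont (d₁ x) (d₂ x) H₁ H₂
    · by_cases hCg : InCg g x
      · rw [HasGDerivWithinAt, if_neg hDg, if_pos hCg] at H₁ H₂ ⊢
        set c := compEnd g x with hcdef
        by_cases hF : (𝓝[Set.Icc a b ∩ Set.Ioi c] c).NeBot
        swap
        · rw [not_neBot] at hF
          rw [hF]
          exact tendsto_bot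
        have hcmem : c ∈ Set.Icc a b := by
          have h1 : c ∈ closure (Set.Icc a b ∩ Set.Ioi c) :=
            mem_closure_iff_nhdsWithin_neBot.mpr hF
          have h2 : c ∈ closure (Set.Icc a b) := closure_mono Set.inter_subset_left h1
          rwa [isClosed_Icc.closure_eq] at h2
        have hxb : x < b := by
          rcases lt_or_eq_of_le hx.2 with h | h
          · exact h
          · exact absurd (h ▸ hCg) hb1
        have hbdd : BddAbove {u | ∀ v ∈ Set.Icc x u, g v = g x} := by
          by_contra hnb
          apply hb1
          have hconst : ∀ v, x ≤ v → g v = g x := by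
            intro v hv
            obtain ⟨u, hu, hvu⟩ := not_bddAbove_iff.mp hnb v
            exact hu v ⟨hv, le_of_lt hvu⟩
          refine ⟨b - x, by linarith, ?_⟩
          intro u hu v hv
          rw [Set.mem_Ioo] at hu hv
          rw [hconst u (by linarith [hu.1]), hconst v (by linarith [hv.1])]
        obtain ⟨ε, hε, hconst⟩ := hCg
        have hSne : {u | ∀ v ∈ Set.Icc x u, g v = g x}.Nonempty := by
          refine ⟨x, fun v hv => ?_⟩
          rw [Set.mem_Icc] at hv
          have : v = x := le_antisymm hv.2 hv.1
          rw [this]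
        have hxc : x < c := by
          have hmemS : x + ε/2 ∈ {u | ∀ v ∈ Set.Icc x u, g v = g x} := by
            intro v hv
            rw [Set.mem_Icc] at hv
            exact hconst v ⟨by linarith [hv.1], by linarith [hv.2]⟩ x
              ⟨by linarith, by linarith⟩
          have h3 := le_csSup hbdd hmemS
          have : x < x + ε/2 := by linarith
          exact lt_of_lt_of_le this h3
        have hIco : ∀ v ∈ Set.Ico x c, g v = g x := by
          intro v hv
          obtain ⟨u, hu, hvu⟩ := exists_lt_of_lt_csSup hSne hv.2
          exact hu v ⟨hv.1, le_of_lt hvu⟩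
        have hgcx : g c = g x := by
          have hne : (𝓝[Set.Ico x c] c).NeBot := by
            rw [← mem_closure_iff_nhdsWithin_neBot, closure_Ico (ne_of_lt hxc)]
            exact ⟨le_of_lt hxc, le_refl c⟩
          have h1 : Tendsto g (𝓝[Set.Ico x c] c) (𝓝 (g c)) :=
            (hg.2 c).mono_left (nhdsWithin_mono _ (fun v hv => le_of_lt hv.2))
          have h2 : Tendsto g (𝓝[Set.Ico x c] c) (𝓝 (g x)) := by
            apply Tendsto.congr' _ tendsto_const_nhds
            filter_upwards [eventually_mem_nhdsWithin] with v hv using (hIco v hv).symm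
          exact tendsto_nhds_unique h1 h2
        have hf₁cx : f₁ c = f₁ x := gcont_eq g f₁ _ x (hf₁ x hx) c hcmem hgcx
        have hf₂cx : f₂ c = f₂ x := gcont_eq g f₂ _ x (hf₂ x hx) c hcmem hgcx
        have key := keyProd g hg a b f₁ f₂ c hcmem M₂ hM₂ (hf₂ c hcmem) hcont
          (d₁ x) (d₂ x) H₁ H₂
        rw [hf₁cx, hf₂cx] at key
        rw [← hf₂cx, ← hf₁cx]
        rw [hf₁cx, hf₂cx]
        exact key
      · rw [HasGDerivWithinAt, if_neg hDg, if_neg hCg] at H₁ H₂ ⊢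
        set F := 𝓝[Set.Icc a b ∩ {u | g u ≠ g x}] x with hFdef
        have hrl : Function.rightLim g x = g x := by
          have h1 : g x ≤ Function.rightLim g x := hg.1.le_rightLim le_rfl
          have h2 : ¬ (0 < Function.rightLim g x - g x) := hDg
          linarith [not_lt.mp h2]
        have hgc : Tendsto g (𝓝 x) (𝓝 (g x)) := by
          rw [← nhdsLE_sup_nhdsGT]
          rw [tendsto_sup]
          constructor
          · exact hg.2 x
          · have := hg.1.tendsto_rightLim x
            rwa [hrl] at this
        have hgF : Tendsto g F (𝓝 (g x)) := hgc.mono_left nhdsWithin_le_nhds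
        have hmem : ∀ᶠ u in F, u ∈ Set.Icc a b :=
          (eventually_mem_nhdsWithin).mono (fun u hu => hu.1)
        have hf2 : Tendsto f₂ F (𝓝 (f₂ x)) := by
          rw [Metric.tendsto_nhds]
          intro ε hε
          obtain ⟨δ, hδ, hδ'⟩ := hf₂ x hx ε hε
          have h1 : ∀ᶠ u in F, |g x - g u| < δ := by
            filter_upwards [(Metric.tendsto_nhds.mp hgF) δ hδ] with u hu
            rw [Real.dist_eq] at hu
            rw [abs_sub_comm]
            exact hu
          filter_upwards [hmem, h1] with u hu h1u
          rw [dist_eq_norm, norm_sub_rev]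
          exact hδ' u hu h1u
        have hid : (fun u => (g u - g x)⁻¹ • ((fun s => f₁ s * f₂ s) u
              - (fun s => f₁ s * f₂ s) x)) =
            fun u => ((g u - g x)⁻¹ • (f₁ u - f₁ x)) * f₂ u
              + f₁ x * ((g u - g x)⁻¹ • (f₂ u - f₂ x)) := by
          funext u
          simp only [RCLike.real_smul_eq_coe_mul]
          ring
        rw [hid]
        have main : Tendsto (fun u => ((g u - g x)⁻¹ • (f₁ u - f₁ x)) * f₂ u) F
            (𝓝 (d₁ x * f₂ x)) := H₁.mul hf2
        have second : Tendsto (fun u => f₁ x * ((g u - g x)⁻¹ • (f₂ u - f₂ x))) F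
            (𝓝 (f₁ x * d₂ x)) := H₂.const_mul _
        have := main.add second
        rw [mul_comm (f₁ x) (d₂ x)] at this
        exact this
  · -- g-continuity of the product
    exact gcont_mul_aux g _ f₁ f₂ hf₁ hf₂ (max (max M₁ M₂) 1)
      (le_max_right _ _)
      (fun x hx => le_trans (hM₁ x hx) (le_trans (le_max_left _ _) (le_max_left _ _)))
      (fun x hx => le_trans (hM₂ x hx) (le_trans (le_max_right _ _) (le_max_left _ _)))
  · -- boundedness of the product
    refine ⟨M₁ * M₂, fun x hx => ?_⟩
    rw [norm_mul]
    exact mul_le_mul (hM₁ x hx) (hM₂ x hx) (norm_nonneg _) hM₁0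
  · -- g-continuity of the derivative
    apply gcont_add_aux
    · exact gcont_mul_aux g _ d₁ f₂ hd₁ hf₂ (max (max Md₁ M₂) 1)
        (le_max_right _ _)
        (fun x hx => le_trans (hMd₁ x hx) (le_trans (le_max_left _ _) (le_max_left _ _)))
        (fun x hx => le_trans (hM₂ x hx) (le_trans (le_max_right _ _) (le_max_left _ _)))
    · exact gcont_mul_aux g _ d₂ f₁ hd₂ hf₁ (max (max Md₂ M₁) 1)
        (le_max_right _ _)
        (fun x hx => le_trans (hMd₂ x hx) (le_trans (le_max_left _ _) (le_max_left _ _)))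
        (fun x hx => le_trans (hM₁ x hx) (le_trans (le_max_right _ _) (le_max_left _ _)))
  · -- boundedness of the derivative
    refine ⟨Md₁ * M₂ + Md₂ * M₁, fun x hx => ?_⟩
    calc ‖d₁ x * f₂ x + d₂ x * f₁ x‖ ≤ ‖d₁ x * f₂ x‖ + ‖d₂ x * f₁ x‖ := norm_add_le _ _
      _ = ‖d₁ x‖ * ‖f₂ x‖ + ‖d₂ x‖ * ‖f₁ x‖ := by rw [norm_mul, norm_mul]
      _ ≤ Md₁ * M₂ + Md₂ * M₁ :=
          add_le_add (mul_le_mul (hMd₁ x hx) (hM₂ x hx) (norm_nonneg _) hMd₁0)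
            (mul_le_mul (hMd₂ x hx) (hM₁ x hx) (norm_nonneg _) hMd₂0)
end

section
/- Let g be a derivator on [0,T] with g(T) < ∞ and let β ∈ L¹_g([0,T); ℂ) satisfy 1 + β(t)Δ⁺g(t) ≠ 0 for all t ∈ [0,T) ∩ D_g. Then the series ∑_{s ∈ [0,T) ∩ D_g} |ln|1 + β(s)Δ⁺g(s)|| and ∑_{s ∈ [0,T) ∩ D_g} |Arg(1 + β(s)Δ⁺g(s))| both converge. -/
open MeasureTheory Set Function Filter Topology

/-! Left continuity of `g` makes the atom of `μ_g` at `s` equal to the jump `Δ⁺g(s)`, so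
integrability of `β` gives `∑ ‖β s‖ Δ⁺g(s) ≤ ∫ ‖β‖ dμ_g < ∞` over the countable set `D_g`.
Hence `z_s = β(s) Δ⁺g(s)` is absolutely summable, and so is the principal logarithm
`log (1 + z_s)`, which is `O(|z_s|)` once `|z_s| ≤ 1/2`. Its real and imaginary parts are
`ln |1 + z_s|` and `Arg (1 + z_s)`. -/

lemma IsDerivator.stieltjesMeasure_singleton {g : ℝ → ℝ} (hg : IsDerivator g) (a : ℝ) :
    stieltjesMeasure g {a} = ENNReal.ofReal (jumpG g a) := by
  have hleft : leftLim (rightLim g) a = g a := by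
    rw [leftLim_rightLim (hg.1.tendsto_leftLim a), (hg.2 a).leftLim_eq]
  rw [stieltjesMeasure, dif_pos hg.1, StieltjesFunction.measure_singleton]
  exact congrArg ENNReal.ofReal (congrArg (rightLim g a - ·) hleft)

lemma Monotone.countable_Dg {g : ℝ → ℝ} (hg : Monotone g) : (Dg g).Countable := by
  refine hg.countable_not_continuousAt.mono
    fun t (ht : 0 < jumpG g t) (hcont : ContinuousAt g t) => ht.ne' ?_
  rw [jumpG, (hcont.continuousWithinAt (s := Ici t)).rightLim_eq, sub_self]

lemma IsDerivator.summable_norm_mul_jumpG {E : Type*} [NormedAddCommGroup E] {g : ℝ → ℝ}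
    (hg : IsDerivator g) {f : ℝ → E} {s : Set ℝ} (hf : IntegrableOn f s (stieltjesMeasure g)) :
    Summable fun t : (s ∩ Dg g : Set ℝ) => ‖f t‖ * jumpG g t := by
  have hfin : ∫⁻ t in s ∩ Dg g, ‖f t‖ₑ ∂stieltjesMeasure g < ⊤ :=
    (lintegral_mono_set inter_subset_left).trans_lt hf.2
  rw [lintegral_countable _ (hg.1.countable_Dg.mono inter_subset_right)] at hfin
  refine (ENNReal.summable_toReal hfin.ne).congr fun t => ?_
  rw [hg.stieltjesMeasure_singleton, ENNReal.toReal_mul, ENNReal.toReal_ofReal t.2.2.le,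
    toReal_enorm]

lemma Complex.summable_abs_log_norm_one_add {ι : Type*} {f : ι → ℂ} (hf : Summable f) :
    Summable fun i => |Real.log ‖1 + f i‖| :=
  summable_abs_iff.2 <| by
    simpa only [Complex.reCLM_apply, Complex.log_re] using
      Complex.reCLM.summable (Complex.summable_log_one_add_of_summable hf)

lemma Complex.summable_abs_arg_one_add {ι : Type*} {f : ι → ℂ} (hf : Summable f) :
    Summable fun i => |Complex.arg (1 + f i)| :=
  summable_abs_iff.2 <| by
    simpa only [Complex.imCLM_apply, Complex.log_im] using
      Complex.imCLM.summable (Complex.summable_log_one_add_of_summable hf)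

theorem stmt14_general (g : ℝ → ℝ) (hg : IsDerivator g) (T : ℝ) (β : ℝ → ℂ)
    (hβ : MeasureTheory.IntegrableOn β (Set.Ico 0 T) (stieltjesMeasure g)) :
    Summable (fun s : (Set.Ico 0 T ∩ Dg g : Set ℝ) =>
      |Real.log ‖1 + β s.1 * (jumpG g s.1 : ℂ)‖|) ∧
    Summable (fun s : (Set.Ico 0 T ∩ Dg g : Set ℝ) =>
      |Complex.arg (1 + β s.1 * (jumpG g s.1 : ℂ))|) := by
  have hjump : Summable fun s : (Set.Ico 0 T ∩ Dg g : Set ℝ) => β s * (jumpG g s : ℂ) :=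
    .of_norm <| (hg.summable_norm_mul_jumpG hβ).congr fun s => by
      rw [norm_mul, Complex.norm_real, Real.norm_of_nonneg s.2.2.le]
  exact ⟨Complex.summable_abs_log_norm_one_add hjump, Complex.summable_abs_arg_one_add hjump⟩

/-- for `β ∈ L¹_g([0,T); ℂ)` with `1 + β(t)Δ⁺g(t) ≠ 0` on `[0,T) ∩ D_g`, the
series `∑ |ln|1 + β(s)Δ⁺g(s)||` and `∑ |Arg(1 + β(s)Δ⁺g(s))|` over `s ∈ [0,T) ∩ D_g`
converge. -/
theorem stmt14 (g : ℝ → ℝ) (hg : IsDerivator g) (T : ℝ) (hT : 0 < T) (β : ℝ → ℂ)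
    (hβ : MeasureTheory.IntegrableOn β (Set.Ico 0 T) (stieltjesMeasure g))
    (hne : ∀ t ∈ Set.Ico 0 T ∩ Dg g, 1 + β t * (jumpG g t : ℂ) ≠ 0) :
    Summable (fun s : (Set.Ico 0 T ∩ Dg g : Set ℝ) =>
      |Real.log ‖1 + β s.1 * (jumpG g s.1 : ℂ)‖|) ∧
    Summable (fun s : (Set.Ico 0 T ∩ Dg g : Set ℝ) =>
      |Complex.arg (1 + β s.1 * (jumpG g s.1 : ℂ))|) :=
  stmt14_general g hg T β hβ
end

section
/- Let g be a derivator on [0,T] and β ∈ L¹_g([0,T); ℂ) with 1 + β(t)Δ⁺g(t) ≠ 0 for all t ∈ [0,T) ∩ D_g, and let exp_g(β; 0, t) denote the g-exponential, i.e., the unique AC_g solution of v'_g = βv, v(0) = 1. Then for β₁, β₂ ∈ L¹_g([0,T); ℂ) with β₁β₂Δ⁺g ∈ L¹_g([0,T); ℂ), exp_g(β₁; 0, t) · exp_g(β₂; 0, t) = exp_g(β₁ + β₂ + β₁β₂Δ⁺g; 0, t) for all t ∈ [0,T]. -/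
open MeasureTheory Set Function Filter Topology

/-- The `g`-exponential
`exp_g(β;0,t) = (∏_{s∈[0,t)∩D_g}(1 + β(s)Δ⁺g(s))) · exp(∫_{[0,t)} β dμ_{g^C})`. -/
noncomputable def expG (g : ℝ → ℝ) (β : ℝ → ℂ) (t : ℝ) : ℂ :=
  (∏' s : (Set.Ico 0 t ∩ Dg g : Set ℝ), (1 + β s.1 * (jumpG g s.1 : ℂ))) *
    Complex.exp (∫ s in Set.Ico 0 t, β s ∂(stieltjesMeasure (contPart g 0)))

namespace Stmt17Aux

open scoped ENNReal

variable {g : ℝ → ℝ}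

lemma jump_nonneg (hm : Monotone g) (s : ℝ) : 0 ≤ jumpG g s :=
  sub_nonneg.2 (hm.le_rightLim le_rfl)

lemma leftLim_g (hg : IsDerivator g) (x : ℝ) : Function.leftLim g x = g x :=
  leftLim_eq_of_tendsto
    ((hg.2 x).mono_left (nhdsWithin_mono x Iio_subset_Iic_self))

lemma leftLim_sf (hg : IsDerivator g) (x : ℝ) :
    Function.leftLim (hg.1.stieltjesFunction) x = g x := by
  have hcoe : ⇑(hg.1.stieltjesFunction) = Function.rightLim g := rfl
  rw [hcoe]
  apply leftLim_eq_of_tendsto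
  have hg' : Tendsto g (𝓝[<] x) (𝓝 (g x)) :=
    (hg.2 x).mono_left (nhdsWithin_mono x Iio_subset_Iic_self)
  refine tendsto_of_tendsto_of_tendsto_of_le_of_le' hg' tendsto_const_nhds ?_ ?_
  · exact Filter.Eventually.of_forall fun u => hg.1.le_rightLim le_rfl
  · filter_upwards [self_mem_nhdsWithin] with u (hu : u < x)
    exact hg.1.rightLim_le hu

lemma meas_g_eq (hg : IsDerivator g) :
    stieltjesMeasure g = (hg.1.stieltjesFunction).measure := by
  rw [stieltjesMeasure, dif_pos hg.1]

lemma meas_g_singleton (hg : IsDerivator g) (a : ℝ) :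
    stieltjesMeasure g {a} = ENNReal.ofReal (jumpG g a) := by
  rw [meas_g_eq hg, StieltjesFunction.measure_singleton, leftLim_sf hg]
  rfl

lemma meas_g_Ico (hg : IsDerivator g) (a b : ℝ) :
    stieltjesMeasure g (Set.Ico a b) = ENNReal.ofReal (g b - g a) := by
  rw [meas_g_eq hg, StieltjesFunction.measure_Ico, leftLim_sf hg, leftLim_sf hg]

lemma finset_sum_jump (hg : IsDerivator g) {a b : ℝ}
    (F : Finset (Set.Ico a b : Set ℝ)) :
    ∑ i ∈ F, ENNReal.ofReal (jumpG g i.1) ≤ ENNReal.ofReal (g b - g a) := by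
  have hdisj : (F : Set (Set.Ico a b : Set ℝ)).PairwiseDisjoint
      (fun i : (Set.Ico a b : Set ℝ) => ({i.1} : Set ℝ)) := by
    intro i _ j _ hij
    simp only [Set.disjoint_singleton_left, Set.mem_singleton_iff]
    exact fun h => hij (Subtype.ext h)
  calc ∑ i ∈ F, ENNReal.ofReal (jumpG g i.1)
      = ∑ i ∈ F, stieltjesMeasure g {i.1} := by
        refine Finset.sum_congr rfl fun i _ => (meas_g_singleton hg i.1).symm
    _ = stieltjesMeasure g (⋃ i ∈ F, ({i.1} : Set ℝ)) :=
        (measure_biUnion_finset hdisj fun i _ => measurableSet_singleton _).symm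
    _ ≤ stieltjesMeasure g (Set.Ico a b) := by
        refine measure_mono ?_
        refine Set.iUnion₂_subset fun i _ => ?_
        simpa using i.2
    _ = ENNReal.ofReal (g b - g a) := meas_g_Ico hg a b

lemma summable_jump (hg : IsDerivator g) (a b : ℝ) :
    Summable (fun s : (Set.Ico a b : Set ℝ) => jumpG g s.1) := by
  have h1 : ∑' s : (Set.Ico a b : Set ℝ), ENNReal.ofReal (jumpG g s.1) ≠ ∞ := by
    rw [ENNReal.tsum_eq_iSup_sum]
    refine ne_top_of_le_ne_top ENNReal.ofReal_ne_top (iSup_le fun F => finset_sum_jump hg F)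
  have := ENNReal.summable_toReal h1
  refine this.congr fun s => ?_
  exact ENNReal.toReal_ofReal (jump_nonneg hg.1 s.1)

lemma tsum_jump_nonneg (hg : IsDerivator g) (a b : ℝ) :
    0 ≤ ∑' s : (Set.Ico a b : Set ℝ), jumpG g s.1 :=
  tsum_nonneg fun s => jump_nonneg hg.1 s.1

lemma tsum_jump_le (hg : IsDerivator g) {a b : ℝ} (hab : a ≤ b) :
    ∑' s : (Set.Ico a b : Set ℝ), jumpG g s.1 ≤ g b - g a := by
  refine Summable.tsum_le_of_sum_le (summable_jump hg a b) fun F => ?_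
  have h0 : (0 : ℝ) ≤ g b - g a := sub_nonneg.2 (hg.1 hab)
  rw [← ENNReal.ofReal_le_ofReal_iff h0,
    ENNReal.ofReal_sum_of_nonneg (fun i _ => jump_nonneg hg.1 i.1)]
  exact finset_sum_jump hg F

lemma tsum_jump_split (hg : IsDerivator g) {a b c : ℝ} (hab : a ≤ b) (hbc : b ≤ c) :
    ∑' s : (Set.Ico a c : Set ℝ), jumpG g s.1
      = (∑' s : (Set.Ico a b : Set ℝ), jumpG g s.1)
        + ∑' s : (Set.Ico b c : Set ℝ), jumpG g s.1 := by
  have hU : Set.Ico a b ∪ Set.Ico b c = Set.Ico a c := Set.Ico_union_Ico_eq_Ico hab hbc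
  rw [← hU]
  exact (summable_jump hg a b).tsum_union_disjoint (Set.Ico_disjoint_Ico_same)
    (summable_jump hg b c)

lemma jumpPart_incr (hg : IsDerivator g) {a b : ℝ} (hab : a ≤ b) :
    jumpPart g 0 b - jumpPart g 0 a = ∑' s : (Set.Ico a b : Set ℝ), jumpG g s.1 := by
  unfold jumpPart
  rcases lt_or_ge 0 a with ha | ha
  · rw [if_pos ha, if_pos (ha.trans_le hab)]
    have := tsum_jump_split hg ha.le hab
    linarith
  · rcases lt_or_ge 0 b with hb | hb
    · rw [if_pos hb, if_neg (not_lt.2 ha)]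
      have := tsum_jump_split hg ha hb.le
      linarith
    · rw [if_neg (not_lt.2 hb), if_neg (not_lt.2 (hab.trans hb))]
      have := tsum_jump_split hg hab hb
      linarith

lemma mono_jumpPart (hg : IsDerivator g) : Monotone (jumpPart g 0) := by
  intro a b hab
  have := jumpPart_incr hg hab
  have h2 := tsum_jump_nonneg hg a b
  linarith

lemma contPart_incr (hg : IsDerivator g) {a b : ℝ} (hab : a ≤ b) :
    contPart g 0 b - contPart g 0 a
      = (g b - g a) - ∑' s : (Set.Ico a b : Set ℝ), jumpG g s.1 := by
  have := jumpPart_incr hg hab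
  simp only [contPart]
  linarith

lemma mono_contPart (hg : IsDerivator g) : Monotone (contPart g 0) := by
  intro a b hab
  have h1 := contPart_incr hg hab
  have h2 := tsum_jump_le hg hab
  linarith

lemma tendsto_left_contPart (hg : IsDerivator g) (x : ℝ) :
    Tendsto (contPart g 0) (𝓝[<] x) (𝓝 (contPart g 0 x)) := by
  have hg' : Tendsto (fun u => contPart g 0 x - g x + g u) (𝓝[<] x)
      (𝓝 (contPart g 0 x)) := by
    have : Tendsto g (𝓝[<] x) (𝓝 (g x)) :=
      (hg.2 x).mono_left (nhdsWithin_mono x Iio_subset_Iic_self)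
    have := this.const_add (contPart g 0 x - g x)
    simpa using this
  refine tendsto_of_tendsto_of_tendsto_of_le_of_le' hg' tendsto_const_nhds ?_ ?_
  · filter_upwards [self_mem_nhdsWithin] with u (hu : u < x)
    have h1 := contPart_incr hg hu.le
    have h2 := tsum_jump_le hg hu.le
    have h3 := tsum_jump_nonneg hg u x
    linarith
  · filter_upwards [self_mem_nhdsWithin] with u (hu : u < x)
    exact mono_contPart hg hu.le

lemma rightLim_contPart (hg : IsDerivator g) (x : ℝ) :
    Function.rightLim (contPart g 0) x = contPart g 0 x := by
  apply rightLim_eq_of_tendsto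
  have hg' : Tendsto (fun u => contPart g 0 x - g x - jumpG g x + g u) (𝓝[>] x)
      (𝓝 (contPart g 0 x)) := by
    have h1 : Tendsto g (𝓝[>] x) (𝓝 (Function.rightLim g x)) := hg.1.tendsto_rightLim x
    have h2 := h1.const_add (contPart g 0 x - g x - jumpG g x)
    have h3 : contPart g 0 x - g x - jumpG g x + Function.rightLim g x = contPart g 0 x := by
      simp [jumpG]
    rw [h3] at h2
    exact h2
  refine tendsto_of_tendsto_of_tendsto_of_le_of_le' tendsto_const_nhds hg' ?_ ?_
  · filter_upwards [self_mem_nhdsWithin] with u (hu : x < u)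
    exact mono_contPart hg hu.le
  · filter_upwards [self_mem_nhdsWithin] with u (hu : x < u)
    have h1 := contPart_incr hg hu.le
    have h2 : jumpG g x ≤ ∑' s : (Set.Ico x u : Set ℝ), jumpG g s.1 := by
      refine Summable.le_tsum (summable_jump hg x u) ⟨x, by simp [hu]⟩
        fun j _ => jump_nonneg hg.1 j.1
    linarith

lemma leftLim_contPart (hg : IsDerivator g) (x : ℝ) :
    Function.leftLim (contPart g 0) x = contPart g 0 x :=
  leftLim_eq_of_tendsto
    (tendsto_left_contPart hg x)

lemma coe_sf_contPart (hg : IsDerivator g) :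
    ⇑((mono_contPart hg).stieltjesFunction) = contPart g 0 := by
  funext x
  exact rightLim_contPart hg x

lemma measC_singleton (hg : IsDerivator g) (a : ℝ) :
    stieltjesMeasure (contPart g 0) {a} = 0 := by
  rw [stieltjesMeasure, dif_pos (mono_contPart hg), StieltjesFunction.measure_singleton]
  rw [show ⇑((mono_contPart hg).stieltjesFunction) = contPart g 0 from coe_sf_contPart hg]
  rw [leftLim_contPart hg]
  simp

lemma noAtoms_measC (hg : IsDerivator g) : NoAtoms (stieltjesMeasure (contPart g 0)) :=
  ⟨fun a => measC_singleton hg a⟩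

lemma sf_g_apply (hg : IsDerivator g) (x : ℝ) :
    hg.1.stieltjesFunction x = g x + jumpG g x := by
  rw [hg.1.stieltjesFunction_eq, jumpG]
  ring

lemma length_le (hg : IsDerivator g) (u : Set ℝ) :
    ((mono_contPart hg).stieltjesFunction).length u ≤ (hg.1.stieltjesFunction).length u := by
  rw [StieltjesFunction.length_eq, StieltjesFunction.length_eq]
  refine le_iInf fun a => le_iInf fun b => le_iInf fun h => ?_
  refine le_trans (iInf_le_of_le a (iInf_le_of_le b (iInf_le_of_le h le_rfl))) ?_
  rcases le_or_gt a b with hab | hab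
  · refine ENNReal.ofReal_le_ofReal ?_
    rw [coe_sf_contPart hg, sf_g_apply hg, sf_g_apply hg]
    have h1 := contPart_incr hg hab
    rcases eq_or_lt_of_le hab with rfl | hab'
    · simp
    · have h2 : jumpG g a ≤ ∑' s : (Set.Ico a b : Set ℝ), jumpG g s.1 := by
        refine Summable.le_tsum (summable_jump hg a b) ⟨a, by simp [hab']⟩
          fun j _ => jump_nonneg hg.1 j.1
      have h3 := jump_nonneg hg.1 b
      linarith
  · have h4 : (mono_contPart hg).stieltjesFunction b
        - (mono_contPart hg).stieltjesFunction a ≤ 0 :=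
      sub_nonpos.2 (((mono_contPart hg).stieltjesFunction).mono hab.le)
    rw [ENNReal.ofReal_of_nonpos h4]
    exact zero_le

lemma measC_le (hg : IsDerivator g) :
    stieltjesMeasure (contPart g 0) ≤ stieltjesMeasure g := by
  rw [stieltjesMeasure, dif_pos (mono_contPart hg), meas_g_eq hg]
  refine Measure.le_iff.2 fun s hs => ?_
  simp only [StieltjesFunction.measure]
  show ((mono_contPart hg).stieltjesFunction).outer s ≤ (hg.1.stieltjesFunction).outer s
  rw [StieltjesFunction.outer, StieltjesFunction.outer]
  rw [OuterMeasure.ofFunction_apply, OuterMeasure.ofFunction_apply]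
  refine le_iInf₂ fun t ht => ?_
  refine le_trans (iInf₂_le t ht) (ENNReal.tsum_le_tsum fun i => length_le hg (t i))

lemma summable_norm_mul_jump (hg : IsDerivator g) {T t : ℝ} (ht : t ≤ T)
    {β : ℝ → ℂ} (hβ : MeasureTheory.IntegrableOn β (Set.Ico 0 T) (stieltjesMeasure g)) :
    Summable (fun s : (Set.Ico 0 t ∩ Dg g : Set ℝ) => ‖β s.1 * (jumpG g s.1 : ℂ)‖) := by
  have key : ∀ (F : Finset (Set.Ico 0 t ∩ Dg g : Set ℝ)),
      ∑ i ∈ F, ENNReal.ofReal ‖β i.1 * (jumpG g i.1 : ℂ)‖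
        ≤ ∫⁻ x in Set.Ico 0 T, ‖β x‖₊ ∂(stieltjesMeasure g) := by
    intro F
    have hdisj : (F : Set (Set.Ico 0 t ∩ Dg g : Set ℝ)).PairwiseDisjoint
        (fun i : (Set.Ico 0 t ∩ Dg g : Set ℝ) => ({i.1} : Set ℝ)) := by
      intro i _ j _ hij
      simp only [Set.disjoint_singleton_left, Set.mem_singleton_iff]
      exact fun h => hij (Subtype.ext h)
    calc ∑ i ∈ F, ENNReal.ofReal ‖β i.1 * (jumpG g i.1 : ℂ)‖
        = ∑ i ∈ F, ∫⁻ x in ({i.1} : Set ℝ), ‖β x‖₊ ∂(stieltjesMeasure g) := by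
          refine Finset.sum_congr rfl fun i _ => ?_
          rw [MeasureTheory.lintegral_singleton, meas_g_singleton hg]
          rw [norm_mul, Complex.norm_real, Real.norm_eq_abs,
            abs_of_nonneg (jump_nonneg hg.1 i.1),
            ENNReal.ofReal_mul (norm_nonneg _), ofReal_norm, enorm_eq_nnnorm]
      _ = ∫⁻ x in ⋃ i ∈ F, ({i.1} : Set ℝ), ‖β x‖₊ ∂(stieltjesMeasure g) :=
          (MeasureTheory.lintegral_biUnion_finset hdisj
            (fun i _ => measurableSet_singleton _) _).symm
      _ ≤ ∫⁻ x in Set.Ico 0 T, ‖β x‖₊ ∂(stieltjesMeasure g) := by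
          refine MeasureTheory.lintegral_mono_set ?_
          refine Set.iUnion₂_subset fun i _ => ?_
          intro x hx
          rw [Set.mem_singleton_iff] at hx
          subst hx
          exact ⟨i.2.1.1, lt_of_lt_of_le i.2.1.2 ht⟩
  have hfin : ∑' s : (Set.Ico 0 t ∩ Dg g : Set ℝ),
      ENNReal.ofReal ‖β s.1 * (jumpG g s.1 : ℂ)‖ ≠ ∞ := by
    rw [ENNReal.tsum_eq_iSup_sum]
    exact ne_top_of_le_ne_top hβ.2.ne (iSup_le key)
  exact (ENNReal.summable_toReal hfin).congr fun s => ENNReal.toReal_ofReal (norm_nonneg _)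

lemma multipliable_one_add {ι : Type*} {a : ι → ℂ} (hsum : Summable fun i => ‖a i‖)
    (hne : ∀ i, 1 + a i ≠ 0) : Multipliable (fun i => 1 + a i) := by
  have hlog : Summable fun i => Complex.log (1 + a i) := by
    refine Summable.of_norm_bounded_eventually (g := fun i => 3/2 * ‖a i‖) (hsum.mul_left _) ?_
    have hev : ∀ᶠ i in Filter.cofinite, ‖a i‖ ≤ 1/2 :=
      hsum.tendsto_cofinite_zero.eventually_le_const (by norm_num)
    filter_upwards [hev] with i hi
    exact Complex.norm_log_one_add_half_le_self hi
  exact Complex.multipliable_of_summable_log hlog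

lemma dg_countable (hg : IsDerivator g) : (Dg g).Countable := by
  refine Set.Countable.mono ?_ hg.1.countable_not_continuousAt
  intro x hx hcont
  have h1 : Function.rightLim g x = g x :=
    rightLim_eq_of_tendsto
      (hcont.tendsto.mono_left nhdsWithin_le_nhds)
  have h2 : jumpG g x = 0 := by rw [jumpG, h1, sub_self]
  have h3 : (0 : ℝ) < jumpG g x := hx
  rw [h2] at h3
  exact lt_irrefl 0 h3

end Stmt17Aux


/-- the multiplicative property of the `g`-exponential:
`exp_g(β₁;0,t)·exp_g(β₂;0,t) = exp_g(β₁ + β₂ + β₁β₂Δ⁺g;0,t)`. -/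
theorem stmt17 (g : ℝ → ℝ) (hg : IsDerivator g) (hg0 : g 0 = 0) (hgc0 : ContinuousAt g 0)
    (T : ℝ) (hT : 0 < T) (β₁ β₂ : ℝ → ℂ)
    (hβ₁ : MeasureTheory.IntegrableOn β₁ (Set.Ico 0 T) (stieltjesMeasure g))
    (hβ₂ : MeasureTheory.IntegrableOn β₂ (Set.Ico 0 T) (stieltjesMeasure g))
    (hβ₁₂ : MeasureTheory.IntegrableOn (fun t => β₁ t * β₂ t * (jumpG g t : ℂ))
      (Set.Ico 0 T) (stieltjesMeasure g))
    (hne₁ : ∀ t ∈ Set.Ico 0 T ∩ Dg g, 1 + β₁ t * (jumpG g t : ℂ) ≠ 0)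
    (hne₂ : ∀ t ∈ Set.Ico 0 T ∩ Dg g, 1 + β₂ t * (jumpG g t : ℂ) ≠ 0) :
    ∀ t ∈ Set.Icc 0 T, expG g β₁ t * expG g β₂ t =
      expG g (fun s => β₁ s + β₂ s + β₁ s * β₂ s * (jumpG g s : ℂ)) t := by
  intro t ht
  obtain ⟨ht0, htT⟩ := ht
  have hsub : ∀ s : (Set.Ico 0 t ∩ Dg g : Set ℝ), s.1 ∈ Set.Ico 0 T ∩ Dg g :=
    fun s => ⟨⟨s.2.1.1, lt_of_lt_of_le s.2.1.2 htT⟩, s.2.2⟩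
  have hs₁ := Stmt17Aux.summable_norm_mul_jump hg htT hβ₁
  have hs₂ := Stmt17Aux.summable_norm_mul_jump hg htT hβ₂
  have m₁ : Multipliable (fun s : (Set.Ico 0 t ∩ Dg g : Set ℝ) =>
      1 + β₁ s.1 * (jumpG g s.1 : ℂ)) :=
    Stmt17Aux.multipliable_one_add hs₁ (fun s => hne₁ s.1 (hsub s))
  have m₂ : Multipliable (fun s : (Set.Ico 0 t ∩ Dg g : Set ℝ) =>
      1 + β₂ s.1 * (jumpG g s.1 : ℂ)) :=
    Stmt17Aux.multipliable_one_add hs₂ (fun s => hne₂ s.1 (hsub s))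
  have hprod : (∏' s : (Set.Ico 0 t ∩ Dg g : Set ℝ), (1 + β₁ s.1 * (jumpG g s.1 : ℂ)))
      * (∏' s : (Set.Ico 0 t ∩ Dg g : Set ℝ), (1 + β₂ s.1 * (jumpG g s.1 : ℂ)))
      = ∏' s : (Set.Ico 0 t ∩ Dg g : Set ℝ),
          (1 + (β₁ s.1 + β₂ s.1 + β₁ s.1 * β₂ s.1 * (jumpG g s.1 : ℂ))
            * (jumpG g s.1 : ℂ)) := by
    rw [← m₁.tprod_mul m₂]
    exact tprod_congr fun s => by ring
  have hle : (stieltjesMeasure (contPart g 0)).restrict (Set.Ico 0 t)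
      ≤ (stieltjesMeasure g).restrict (Set.Ico 0 t) :=
    Measure.restrict_mono (le_refl _) (Stmt17Aux.measC_le hg)
  have hsubset : Set.Ico 0 t ⊆ Set.Ico 0 T := Set.Ico_subset_Ico_right htT
  have hI₁ : MeasureTheory.IntegrableOn β₁ (Set.Ico 0 t) (stieltjesMeasure (contPart g 0)) :=
    (hβ₁.mono_set hsubset).mono_measure (Stmt17Aux.measC_le hg)
  have hI₂ : MeasureTheory.IntegrableOn β₂ (Set.Ico 0 t) (stieltjesMeasure (contPart g 0)) :=
    (hβ₂.mono_set hsubset).mono_measure (Stmt17Aux.measC_le hg)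
  haveI : NullSingletonClass (stieltjesMeasure (contPart g 0)) := Stmt17Aux.noAtoms_measC hg
  have hDgnull : stieltjesMeasure (contPart g 0) (Dg g) = 0 :=
    (Stmt17Aux.dg_countable hg).measure_zero _
  have hzero : ∀ᵐ x ∂((stieltjesMeasure (contPart g 0)).restrict (Set.Ico 0 t)),
      β₁ x * β₂ x * (jumpG g x : ℂ) = 0 := by
    refine MeasureTheory.ae_restrict_of_ae ?_
    rw [MeasureTheory.ae_iff]
    refine MeasureTheory.measure_mono_null ?_ hDgnull
    intro x hx
    simp only [Set.mem_setOf_eq] at hx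
    by_contra hxD
    apply hx
    have hJ0 : jumpG g x = 0 :=
      le_antisymm (not_lt.1 hxD) (Stmt17Aux.jump_nonneg hg.1 x)
    rw [hJ0]
    simp
  have hint : (∫ s in Set.Ico 0 t, (β₁ s + β₂ s + β₁ s * β₂ s * (jumpG g s : ℂ))
        ∂(stieltjesMeasure (contPart g 0)))
      = (∫ s in Set.Ico 0 t, β₁ s ∂(stieltjesMeasure (contPart g 0)))
        + ∫ s in Set.Ico 0 t, β₂ s ∂(stieltjesMeasure (contPart g 0)) := by
    rw [MeasureTheory.integral_congr_ae (g := fun s => β₁ s + β₂ s)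
      (hzero.mono fun x hx => by rw [hx, add_zero])]
    exact MeasureTheory.integral_add hI₁ hI₂
  simp only [expG]
  rw [mul_mul_mul_comm, hprod, ← Complex.exp_add, ← hint]
end
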